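/- arXiv:1609.02539 — 3 statements merged into one kernel-verified Lean document; each statement's English description precedes it below -/
import Mathlib

section
/- Let α,β,γ,δ be complex numbers for which both sides below are defined, and let a, b be coprime positive integers. Then a^β b^δ η_{α,β,γ,δ,a,b}(0,0,β+δ) = B_{α,−δ,γ,−β,a} · B_{γ,−β,α,−δ,b}. -/
/-- The shifted divisor function `σ_{α,β}(n) = ∑_{n₁n₂=n} n₁^{−α} n₂^{−β}`. -/
noncomputable def sigmaC (α β : ℂ) (n : ℕ) : ℂ :=
  ∑ d ∈ n.divisors, (d : ℂ) ^ (-α) * ((n / d : ℕ) : ℂ) ^ (-β)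

/-- The finite Euler product `B_{α,β,γ,δ,a}`, the product running over the
prime powers `p^ν ‖ a`. -/
noncomputable def Bfactor (α β γ δ : ℂ) (a : ℕ) : ℂ :=
  ∏ p ∈ a.primeFactors,
    (∑' j : ℕ, sigmaC α β (p ^ j) * sigmaC γ δ (p ^ (j + a.factorization p)) *
        (p : ℂ) ^ (-(j : ℂ))) /
    (∑' j : ℕ, sigmaC α β (p ^ j) * sigmaC γ δ (p ^ j) * (p : ℂ) ^ (-(j : ℂ)))

/-- The local factor `c_p(x,y,z) = (1−p^{−1−x})(1−p^{−1−y})(1−p^{−2−z})^{−1}`. -/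
noncomputable def cP (p : ℕ) (x y z : ℂ) : ℂ :=
  (1 - (p : ℂ) ^ (-1 - x)) * (1 - (p : ℂ) ^ (-1 - y)) * (1 - (p : ℂ) ^ (-2 - z))⁻¹

/-- The finite Euler product `η_{α,β,γ,δ,a}(u,v,s)`. -/
noncomputable def etaA (α β γ δ : ℂ) (a : ℕ) (u v s : ℂ) : ℂ :=
  ∑ l ∈ a.divisors, (l : ℂ) ^ (-γ + δ - 2 * v - s) *
    ∏ p ∈ (a / l).primeFactors,
      cP p (α - β + γ - δ + 2 * u + 2 * v + s) (γ - δ + 2 * v) (α - β + γ - δ + 2 * u + 2 * v)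

/-- `η_{α,β,γ,δ,a,b}(u,v,s) = η_{α,β,γ,δ,a}(u,v,s) η_{γ,δ,α,β,b}(u,v,s)`. -/
noncomputable def etaAB (α β γ δ : ℂ) (a b : ℕ) (u v s : ℂ) : ℂ :=
  etaA α β γ δ a u v s * etaA γ δ α β b u v s

/-!
At a prime `p`, `σ_{α,β}(p^j)` is the complete homogeneous polynomial `h_j(p^{-α}, p^{-β})`
in two variables, so the Euler factor of `B_{α,-δ,γ,-β,a}` at `p^ν ‖ a` is a quotient
`P_ν / P_0` of the series `P_ν = ∑_j h_j(x, y) h_{j+ν}(u, v)` with `x = p^{-1-α}`,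
`y = p^{-1+δ}`, `u = p^{-γ}`, `v = p^β`. The recursion `h_{n+1}(u, v) = u h_n(u, v) + v^{n+1}`
gives `P_{ν+1} = u P_ν + v^{ν+1} / ((1 - xv)(1 - yv))`, and used in the first pair of
variables it gives `P_0 = x P_1 + 1 / ((1 - yu)(1 - yv))`. Solving these two relations for `P_0`
yields `P_ν / P_0 = u^ν + c ∑_{i<ν} u^i v^{ν-i}` with
`c = (1 - xu)(1 - yu) / (1 - xyuv) = c_p(α+γ, γ-δ, α-β+γ-δ)`.

On the other side, `a^β η_a(0, 0, β + δ)` is the value at `a` of the multiplicative function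
`n ↦ n^β ∑_{l ∣ n} l^{-β-γ} ∏_{p ∣ n/l} c`, whose value at `p^ν` is the same expression.
-/

open Finset Complex ArithmeticFunction

section CompleteHom

variable {R : Type*} [CommSemiring R]

def completeHom (x y : R) (n : ℕ) : R := ∑ i ∈ range (n + 1), x ^ i * y ^ (n - i)

@[simp] lemma completeHom_zero (x y : R) : completeHom x y 0 = 1 := by simp [completeHom]

lemma completeHom_succ (x y : R) (n : ℕ) :
    completeHom x y (n + 1) = x * completeHom x y n + y ^ (n + 1) := by
  rw [completeHom, sum_range_succ', completeHom, mul_sum]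
  congr 1
  · exact sum_congr rfl fun i _ => by rw [Nat.add_sub_add_right, pow_succ]; ring
  · simp

lemma completeHom_mul_pow (x y t : R) (n : ℕ) :
    completeHom x y n * t ^ n = completeHom (x * t) (y * t) n := by
  rw [completeHom, completeHom, sum_mul]
  refine sum_congr rfl fun i hi => ?_
  rw [← pow_mul_pow_sub t (Nat.lt_succ_iff.mp (mem_range.mp hi))]
  ring

end CompleteHom

lemma pow_mul_sum_range_mul_inv_pow {K : Type*} [Field K] {u v : K} (hv : v ≠ 0) (c : K)
    (ν : ℕ) :
    v ^ ν * (∑ j ∈ range ν, (v⁻¹ * u) ^ j * c + (v⁻¹ * u) ^ ν)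
      = u ^ ν + c * ∑ i ∈ range ν, u ^ i * v ^ (ν - i) := by
  rw [mul_add, mul_sum, mul_sum, ← mul_pow, mul_inv_cancel_left₀ hv, add_comm]
  congr 1
  refine sum_congr rfl fun j hj => ?_
  rw [← pow_mul_pow_sub v (mem_range.mp hj).le, mul_pow, inv_pow]
  field_simp

section Analytic

variable {𝕜 : Type*} [NormedField 𝕜]

lemma norm_completeHom_le {x y : 𝕜} {r : ℝ} (hx : ‖x‖ ≤ r) (hy : ‖y‖ ≤ r) (n : ℕ) :
    ‖completeHom x y n‖ ≤ (n + 1) * r ^ n := by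
  have hr : 0 ≤ r := (norm_nonneg x).trans hx
  calc ‖completeHom x y n‖ ≤ ∑ i ∈ range (n + 1), ‖x ^ i * y ^ (n - i)‖ := norm_sum_le _ _
    _ ≤ ∑ i ∈ range (n + 1), r ^ n := by
        refine sum_le_sum fun i hi => ?_
        rw [norm_mul, norm_pow, norm_pow,
          ← pow_mul_pow_sub r (Nat.lt_succ_iff.mp (mem_range.mp hi))]
        gcongr
    _ = (n + 1) * r ^ n := by simp

lemma norm_mul_lt_one_of_le {a b : 𝕜} {r s : ℝ} (ha : ‖a‖ ≤ r) (hb : ‖b‖ ≤ s)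
    (hrs : r * s < 1) : ‖a * b‖ < 1 :=
  (norm_mul a b).trans_le (mul_le_mul ha hb (norm_nonneg b) ((norm_nonneg a).trans ha))
    |>.trans_lt hrs

lemma one_sub_ne_zero_of_norm_lt_one {a : 𝕜} (ha : ‖a‖ < 1) : 1 - a ≠ 0 :=
  sub_ne_zero.mpr fun h => by simp [← h] at ha

variable [CompleteSpace 𝕜]

lemma hasSum_completeHom {x y : 𝕜} (hx : ‖x‖ < 1) (hy : ‖y‖ < 1) :
    HasSum (completeHom x y) ((1 - x)⁻¹ * (1 - y)⁻¹) := by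
  have hx' : Summable fun n => ‖x ^ n‖ := by
    simpa [norm_pow] using summable_geometric_of_lt_one (norm_nonneg x) hx
  have hy' : Summable fun n => ‖y ^ n‖ := by
    simpa [norm_pow] using summable_geometric_of_lt_one (norm_nonneg y) hy
  rw [← tsum_geometric_of_norm_lt_one hx, ← tsum_geometric_of_norm_lt_one hy]
  exact hasSum_sum_range_mul_of_summable_norm hx' hy'

end Analytic

section Pairing

variable {𝕜 : Type*} [NormedField 𝕜] [CompleteSpace 𝕜] {x y u v : 𝕜} {r s : ℝ}

noncomputable def completeHomPairing (x y u v : 𝕜) (ν : ℕ) : 𝕜 :=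
  ∑' j, completeHom x y j * completeHom u v (j + ν)

lemma summable_completeHom_mul_completeHom (hx : ‖x‖ ≤ r) (hy : ‖y‖ ≤ r) (hu : ‖u‖ ≤ s)
    (hv : ‖v‖ ≤ s) (hrs : r * s < 1) (ν : ℕ) :
    Summable fun j => completeHom x y j * completeHom u v (j + ν) := by
  have hr : 0 ≤ r := (norm_nonneg x).trans hx
  have hs : 0 ≤ s := (norm_nonneg u).trans hu
  have hρ : ‖r * s‖ < 1 := by rwa [Real.norm_of_nonneg (mul_nonneg hr hs)]
  have hpoly : Summable fun j : ℕ => ((j : ℝ) + 1) * ((j : ℝ) + ν + 1) * (r * s) ^ j := by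
    have h k := summable_pow_mul_geometric_of_norm_lt_one (R := ℝ) k hρ
    refine ((h 2).add (((h 1).mul_left ((ν : ℝ) + 2)).add ((h 0).mul_left ((ν : ℝ) + 1)))).congr
      fun j => by ring
  refine Summable.of_norm_bounded (hpoly.mul_left (s ^ ν)) fun j => ?_
  calc ‖completeHom x y j * completeHom u v (j + ν)‖
      ≤ ((j + 1) * r ^ j) * ((↑(j + ν) + 1) * s ^ (j + ν)) := by
        rw [norm_mul]
        exact mul_le_mul (norm_completeHom_le hx hy j) (norm_completeHom_le hu hv (j + ν))
          (norm_nonneg _) (by positivity)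
    _ = s ^ ν * (((j : ℝ) + 1) * ((j : ℝ) + ν + 1) * (r * s) ^ j) := by
        push_cast; ring

lemma completeHomPairing_succ (hx : ‖x‖ ≤ r) (hy : ‖y‖ ≤ r) (hu : ‖u‖ ≤ s)
    (hv : ‖v‖ ≤ s) (hrs : r * s < 1) (ν : ℕ) :
    completeHomPairing x y u v (ν + 1)
      = u * completeHomPairing x y u v ν + v ^ (ν + 1) * ((1 - x * v)⁻¹ * (1 - y * v)⁻¹) := by
  have hsum := ((summable_completeHom_mul_completeHom hx hy hu hv hrs ν).hasSum.mul_left u).add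
    ((hasSum_completeHom (norm_mul_lt_one_of_le hx hv hrs)
      (norm_mul_lt_one_of_le hy hv hrs)).mul_left (v ^ (ν + 1)))
  refine (hsum.tsum_eq ▸ tsum_congr fun j => ?_)
  rw [← add_assoc, completeHom_succ, ← completeHom_mul_pow]
  ring

lemma completeHomPairing_zero_eq (hx : ‖x‖ ≤ r) (hy : ‖y‖ ≤ r) (hu : ‖u‖ ≤ s)
    (hv : ‖v‖ ≤ s) (hrs : r * s < 1) :
    completeHomPairing x y u v 0
      = x * completeHomPairing x y u v 1 + (1 - y * u)⁻¹ * (1 - y * v)⁻¹ := by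
  have hyuv := hasSum_completeHom (norm_mul_lt_one_of_le hy hu hrs)
    (norm_mul_lt_one_of_le hy hv hrs)
  have htail := (hasSum_nat_add_iff' 1).mpr hyuv
  have hsum := ((summable_completeHom_mul_completeHom hx hy hu hv hrs 1).hasSum.mul_left x).add
    htail
  have hterm : ∀ j, x * (completeHom x y j * completeHom u v (j + 1))
        + completeHom (y * u) (y * v) (j + 1)
      = completeHom x y (j + 1) * completeHom u v (j + 1 + 0) := fun j => by
    rw [mul_comm y u, mul_comm y v, ← completeHom_mul_pow, completeHom_succ x y]
    ring
  rw [completeHomPairing,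
    (summable_completeHom_mul_completeHom hx hy hu hv hrs 0).tsum_eq_zero_add]
  simp only [← hterm, hsum.tsum_eq]
  simp only [completeHomPairing, sum_range_one, completeHom_zero, add_zero, mul_one]
  ring

lemma completeHomPairing_zero_mul (hx : ‖x‖ ≤ r) (hy : ‖y‖ ≤ r) (hu : ‖u‖ ≤ s)
    (hv : ‖v‖ ≤ s) (hrs : r * s < 1) :
    completeHomPairing x y u v 0 * ((1 - x * u) * (1 - y * u))
      = (1 - x * y * u * v) * ((1 - x * v)⁻¹ * (1 - y * v)⁻¹) := by
  have h0 := completeHomPairing_zero_eq hx hy hu hv hrs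
  rw [completeHomPairing_succ hx hy hu hv hrs, zero_add, pow_one] at h0
  have hxv := one_sub_ne_zero_of_norm_lt_one (norm_mul_lt_one_of_le hx hv hrs)
  have hyu := one_sub_ne_zero_of_norm_lt_one (norm_mul_lt_one_of_le hy hu hrs)
  have hyv := one_sub_ne_zero_of_norm_lt_one (norm_mul_lt_one_of_le hy hv hrs)
  linear_combination (1 - y * u) * h0 + (1 - y * v)⁻¹ * mul_inv_cancel₀ hyu
    - (1 - y * v)⁻¹ * mul_inv_cancel₀ hxv

lemma completeHomPairing_eq (hx : ‖x‖ ≤ r) (hy : ‖y‖ ≤ r) (hu : ‖u‖ ≤ s)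
    (hv : ‖v‖ ≤ s) (hrs : r * s < 1) (ν : ℕ) :
    completeHomPairing x y u v ν = u ^ ν * completeHomPairing x y u v 0
      + (1 - x * v)⁻¹ * (1 - y * v)⁻¹ * ∑ i ∈ range ν, u ^ i * v ^ (ν - i) := by
  induction ν with
  | zero => simp
  | succ n ih =>
    rw [completeHomPairing_succ hx hy hu hv hrs, ih, sum_range_succ']
    have hshift : ∀ i ∈ range n,
        u ^ (i + 1) * v ^ (n + 1 - (i + 1)) = u * (u ^ i * v ^ (n - i)) :=
      fun i _ => by rw [Nat.add_sub_add_right]; ring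
    rw [sum_congr rfl hshift, ← mul_sum]
    simp only [pow_zero, Nat.sub_zero, one_mul]
    ring

lemma completeHomPairing_div (hx : ‖x‖ ≤ r) (hy : ‖y‖ ≤ r) (hu : ‖u‖ ≤ s)
    (hv : ‖v‖ ≤ s) (hrs : r * s < 1) (ν : ℕ) :
    completeHomPairing x y u v ν / completeHomPairing x y u v 0
      = u ^ ν + (1 - x * u) * (1 - y * u) * (1 - x * y * u * v)⁻¹
          * ∑ i ∈ range ν, u ^ i * v ^ (ν - i) := by
  have hxv := one_sub_ne_zero_of_norm_lt_one (norm_mul_lt_one_of_le hx hv hrs)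
  have hyv := one_sub_ne_zero_of_norm_lt_one (norm_mul_lt_one_of_le hy hv hrs)
  have hxyuv : 1 - x * y * u * v ≠ 0 := by
    refine one_sub_ne_zero_of_norm_lt_one ?_
    rw [show x * y * u * v = (x * u) * (y * v) by ring, norm_mul]
    exact mul_lt_one_of_nonneg_of_lt_one_left (norm_nonneg _)
      (norm_mul_lt_one_of_le hx hu hrs) (norm_mul_lt_one_of_le hy hv hrs).le
  have hP := completeHomPairing_zero_mul hx hy hu hv hrs
  have hP0 : completeHomPairing x y u v 0 ≠ 0 := by
    intro h
    rw [h, zero_mul] at hP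
    exact mul_ne_zero hxyuv (mul_ne_zero (inv_ne_zero hxv) (inv_ne_zero hyv)) hP.symm
  rw [div_eq_iff hP0, completeHomPairing_eq hx hy hu hv hrs]
  linear_combination -(∑ i ∈ range ν, u ^ i * v ^ (ν - i)) * (1 - x * y * u * v)⁻¹ * hP
    - (∑ i ∈ range ν, u ^ i * v ^ (ν - i)) * ((1 - x * v)⁻¹ * (1 - y * v)⁻¹)
      * inv_mul_cancel₀ hxyuv

lemma natCast_pow_cpow (p j : ℕ) (w : ℂ) : ((p : ℂ) ^ j) ^ w = ((p : ℂ) ^ w) ^ j := by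
  rw [← natCast_cpow_natCast_mul, cpow_nat_mul]

lemma sigmaC_prime_pow {p : ℕ} (hp : p.Prime) (A B : ℂ) (j : ℕ) :
    sigmaC A B (p ^ j) = completeHom ((p : ℂ) ^ (-A)) ((p : ℂ) ^ (-B)) j := by
  rw [sigmaC, Nat.sum_divisors_prime_pow hp, completeHom]
  refine sum_congr rfl fun i hi => ?_
  rw [Nat.pow_div (Nat.lt_succ_iff.mp (mem_range.mp hi)) hp.pos, Nat.cast_pow, Nat.cast_pow,
    natCast_pow_cpow, natCast_pow_cpow]

lemma norm_natCast_cpow_le {p : ℕ} (hp : 0 < p) {w : ℂ} {c : ℝ} (hw : ‖w‖ ≤ c) :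
    ‖(p : ℂ) ^ w‖ ≤ (p : ℝ) ^ c := by
  rw [norm_natCast_cpow_of_pos hp]
  exact Real.rpow_le_rpow_of_exponent_le (by exact_mod_cast hp) ((re_le_norm w).trans hw)

lemma tsum_sigmaC_div_tsum_sigmaC {α β γ δ : ℂ} (hα : ‖α‖ < 1 / 4) (hβ : ‖β‖ < 1 / 4)
    (hγ : ‖γ‖ < 1 / 4) (hδ : ‖δ‖ < 1 / 4) {p : ℕ} (hp : p.Prime) (ν : ℕ) :
    (∑' j : ℕ, sigmaC α (-δ) (p ^ j) * sigmaC γ (-β) (p ^ (j + ν)) * (p : ℂ) ^ (-(j : ℂ))) /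
        (∑' j : ℕ, sigmaC α (-δ) (p ^ j) * sigmaC γ (-β) (p ^ j) * (p : ℂ) ^ (-(j : ℂ)))
      = ((p : ℂ) ^ (-γ)) ^ ν + cP p (α + γ) (γ - δ) (α - β + γ - δ)
          * ∑ i ∈ range ν, ((p : ℂ) ^ (-γ)) ^ i * ((p : ℂ) ^ β) ^ (ν - i) := by
  set x := (p : ℂ) ^ (-α) * (p : ℂ)⁻¹
  set y := (p : ℂ) ^ δ * (p : ℂ)⁻¹
  set u := (p : ℂ) ^ (-γ)
  set v := (p : ℂ) ^ β
  have hterm : ∀ j k : ℕ,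
      sigmaC α (-δ) (p ^ j) * sigmaC γ (-β) (p ^ (j + k)) * (p : ℂ) ^ (-(j : ℂ))
        = completeHom x y j * completeHom u v (j + k) := fun j k => by
    rw [sigmaC_prime_pow hp, sigmaC_prime_pow hp, neg_neg, neg_neg, cpow_neg _ (j : ℂ),
      cpow_natCast, ← inv_pow, mul_right_comm, completeHom_mul_pow]
  have hden : ∀ j : ℕ, sigmaC α (-δ) (p ^ j) * sigmaC γ (-β) (p ^ j) * (p : ℂ) ^ (-(j : ℂ))
      = completeHom x y j * completeHom u v (j + 0) := fun j => hterm j 0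
  have hP : (p : ℂ) ≠ 0 := by exact_mod_cast hp.ne_zero
  have hcP : cP p (α + γ) (γ - δ) (α - β + γ - δ)
      = (1 - x * u) * (1 - y * u) * (1 - x * y * u * v)⁻¹ := by
    have hadd : ∀ a b : ℂ, (p : ℂ) ^ a * (p : ℂ) ^ b = (p : ℂ) ^ (a + b) :=
      fun a b => (cpow_add a b hP).symm
    simp only [cP, x, y, u, v, ← cpow_neg_one, hadd]
    ring_nf
  set s : ℝ := (p : ℝ) ^ (1 / 4 : ℝ)
  have hp0 : (0 : ℝ) < p := by exact_mod_cast hp.pos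
  have hbound : ∀ w : ℂ, ‖w‖ < 1 / 4 → ‖(p : ℂ) ^ w‖ ≤ s := fun w hw =>
    norm_natCast_cpow_le hp.pos hw.le
  have hx : ‖x‖ ≤ s * (p : ℝ)⁻¹ := by
    rw [norm_mul, norm_inv, Complex.norm_natCast]
    exact mul_le_mul_of_nonneg_right (hbound _ (by rwa [norm_neg])) (by positivity)
  have hy : ‖y‖ ≤ s * (p : ℝ)⁻¹ := by
    rw [norm_mul, norm_inv, Complex.norm_natCast]
    exact mul_le_mul_of_nonneg_right (hbound _ hδ) (by positivity)
  have hrs : s * (p : ℝ)⁻¹ * s < 1 := by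
    rw [mul_right_comm, ← Real.rpow_add hp0, ← div_eq_mul_inv, div_lt_one hp0]
    exact Real.rpow_lt_self_of_one_lt (by exact_mod_cast hp.one_lt) (by norm_num)
  rw [tsum_congr (hterm · ν), tsum_congr hden, hcP]
  exact completeHomPairing_div hx hy (hbound _ (by rwa [norm_neg])) (hbound _ hβ) hrs ν

lemma toArithmeticFunction_apply_of_ne_zero {R : Type*} [Zero R] (f : ℕ → R) {n : ℕ}
    (hn : n ≠ 0) : toArithmeticFunction f n = f n :=
  if_neg hn

lemma isMultiplicative_natCast_cpow (s : ℂ) :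
    (toArithmeticFunction fun n : ℕ => (n : ℂ) ^ s).IsMultiplicative := by
  rw [IsMultiplicative.iff_ne_zero]
  refine ⟨by simp [toArithmeticFunction], fun {m n} hm hn _ => ?_⟩
  rw [toArithmeticFunction_apply_of_ne_zero _ (mul_ne_zero hm hn),
    toArithmeticFunction_apply_of_ne_zero _ hm, toArithmeticFunction_apply_of_ne_zero _ hn,
    Nat.cast_mul, natCast_mul_natCast_cpow]

lemma etaA_eq_mul_apply (α β γ δ : ℂ) {a : ℕ} (ha : a ≠ 0) (u v s : ℂ) :
    etaA α β γ δ a u v s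
      = (toArithmeticFunction (fun n : ℕ => (n : ℂ) ^ (-γ + δ - 2 * v - s))
          * prodPrimeFactors fun p => cP p (α - β + γ - δ + 2 * u + 2 * v + s) (γ - δ + 2 * v)
              (α - β + γ - δ + 2 * u + 2 * v)) a := by
  rw [etaA, mul_apply, Nat.sum_divisorsAntidiagonal fun l m =>
    toArithmeticFunction (fun n : ℕ => (n : ℂ) ^ (-γ + δ - 2 * v - s)) l
      * prodPrimeFactors (fun p => cP p (α - β + γ - δ + 2 * u + 2 * v + s) (γ - δ + 2 * v)
          (α - β + γ - δ + 2 * u + 2 * v)) m]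
  refine sum_congr rfl fun l hl => ?_
  have hl0 : l ≠ 0 := (Nat.pos_of_mem_divisors hl).ne'
  have hal : a / l ≠ 0 := (Nat.div_ne_zero_iff_of_dvd (Nat.dvd_of_mem_divisors hl)).mpr ⟨ha, hl0⟩
  simp [toArithmeticFunction, hl0, hal]

lemma natCast_cpow_mul_prodPrimeFactors_apply_prime_pow {p : ℕ} (hp : p.Prime) (e : ℂ)
    (c : ℕ → ℂ) (ν : ℕ) :
    (toArithmeticFunction (fun n : ℕ => (n : ℂ) ^ e) * prodPrimeFactors c) (p ^ ν)
      = ∑ j ∈ range ν, ((p : ℂ) ^ e) ^ j * c p + ((p : ℂ) ^ e) ^ ν := by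
  rw [mul_apply, Nat.sum_divisorsAntidiagonal fun l m =>
      toArithmeticFunction (fun n : ℕ => (n : ℂ) ^ e) l * prodPrimeFactors c m,
    Nat.sum_divisors_prime_pow hp, sum_range_succ]
  congr 1
  · refine sum_congr rfl fun j hj => ?_
    have hjν := mem_range.mp hj
    rw [Nat.pow_div hjν.le hp.pos, prodPrimeFactors_apply (pow_ne_zero _ hp.ne_zero),
      Nat.primeFactors_prime_pow (Nat.sub_ne_zero_of_lt hjν) hp]
    simp [toArithmeticFunction, hp.ne_zero, natCast_pow_cpow]
  · rw [Nat.div_self (pow_pos hp.pos ν)]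
    simp [toArithmeticFunction, hp.ne_zero, natCast_pow_cpow]

lemma natCast_cpow_mul_etaA {α β γ δ : ℂ} (hα : ‖α‖ < 1 / 4) (hβ : ‖β‖ < 1 / 4)
    (hγ : ‖γ‖ < 1 / 4) (hδ : ‖δ‖ < 1 / 4) {a : ℕ} (ha : a ≠ 0) :
    (a : ℂ) ^ β * etaA α β γ δ a 0 0 (β + δ) = Bfactor α (-δ) γ (-β) a := by
  rw [etaA_eq_mul_apply α β γ δ ha]
  simp only [mul_zero, add_zero, sub_zero]
  rw [show -γ + δ - (β + δ) = -β - γ by ring, show α - β + γ - δ + (β + δ) = α + γ by ring]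
  have hF := (isMultiplicative_natCast_cpow β).pmul ((isMultiplicative_natCast_cpow (-β - γ)).mul
    (IsMultiplicative.prodPrimeFactors fun p => cP p (α + γ) (γ - δ) (α - β + γ - δ)))
  have hcpow : (a : ℂ) ^ β = toArithmeticFunction (fun n : ℕ => (n : ℂ) ^ β) a :=
    (toArithmeticFunction_apply_of_ne_zero (fun n : ℕ => (n : ℂ) ^ β) ha).symm
  rw [hcpow, ← pmul_apply, hF.multiplicative_factorization _ ha,
    Nat.prod_factorization_eq_prod_primeFactors, Bfactor]
  refine prod_congr rfl fun p hp => ?_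
  replace hp := Nat.prime_of_mem_primeFactors hp
  have hp0 : (p : ℂ) ≠ 0 := by exact_mod_cast hp.ne_zero
  have hexp : (p : ℂ) ^ (-β - γ) = ((p : ℂ) ^ β)⁻¹ * (p : ℂ) ^ (-γ) := by
    rw [sub_eq_add_neg, cpow_add _ _ hp0, cpow_neg]
  rw [tsum_sigmaC_div_tsum_sigmaC hα hβ hγ hδ hp, pmul_apply,
    natCast_cpow_mul_prodPrimeFactors_apply_prime_pow hp,
    toArithmeticFunction_apply_of_ne_zero _ (pow_ne_zero _ hp.ne_zero), Nat.cast_pow,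
    natCast_pow_cpow, hexp]
  exact pow_mul_sum_range_mul_inv_pow (cpow_ne_zero_iff.mpr (.inl hp0)) _ _

theorem stmt_4_general (α β γ δ : ℂ)
    (hα : ‖α‖ < 1 / 4) (hβ : ‖β‖ < 1 / 4)
    (hγ : ‖γ‖ < 1 / 4) (hδ : ‖δ‖ < 1 / 4)
    (a b : ℕ) (ha : 0 < a) (hb : 0 < b) :
    (a : ℂ) ^ β * (b : ℂ) ^ δ * etaAB α β γ δ a b 0 0 (β + δ)
      = Bfactor α (-δ) γ (-β) a * Bfactor γ (-β) α (-δ) b := by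
  rw [etaAB, mul_mul_mul_comm, natCast_cpow_mul_etaA hα hβ hγ hδ ha.ne', add_comm β δ,
    natCast_cpow_mul_etaA hγ hδ hα hβ hb.ne']

/-- for coprime positive integers `a, b`,
`a^β b^δ η_{α,β,γ,δ,a,b}(0,0,β+δ) = B_{α,−δ,γ,−β,a} B_{γ,−β,α,−δ,b}`.
The smallness hypothesis on the shifts guarantees that both sides are defined
(all the series converge and no division by zero occurs). -/
theorem stmt_4 (α β γ δ : ℂ)
    (hα : ‖α‖ < 1 / 4) (hβ : ‖β‖ < 1 / 4)
    (hγ : ‖γ‖ < 1 / 4) (hδ : ‖δ‖ < 1 / 4)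
    (a b : ℕ) (ha : 0 < a) (hb : 0 < b) (hab : Nat.gcd a b = 1) :
    (a : ℂ) ^ β * (b : ℂ) ^ δ * etaAB α β γ δ a b 0 0 (β + δ)
      = Bfactor α (-δ) γ (-β) a * Bfactor γ (-β) α (-δ) b :=
  stmt_4_general α β γ δ hα hβ hγ hδ a b ha hb
end Pairing
end

section
/- Let a, b be coprime positive integers, let k | b and ℓ | a, and let w, z, s be complex numbers with Re(w) > 0, Re(z) > 0 and Re(w+z+s) > 0. Then ∑_{m₁,n₁ ≥ 1, gcd(m₁, b/k)=1, gcd(n₁, a/ℓ)=1} gcd(m₁,n₁)^{1−s} m₁^{−1−w} n₁^{−1−z} equals [ζ(1+w+z+s) ζ(1+w) ζ(1+z)/ζ(2+w+z)] · ∏_{p | a/ℓ} c_p(w+z+s, z, w+z) · ∏_{p | b/k} c_p(w+z+s, w, w+z). -/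
open Complex LSeries Nat Finset
open scoped LSeries.notation

namespace Stmt10

/-- Indicator of being coprime to `M`. -/
noncomputable def Zind (M : ℕ) : ℕ → ℂ := fun n => if Nat.gcd n M = 1 then 1 else 0

/-- `μ` restricted to numbers coprime to `M`. -/
noncomputable def muind (M : ℕ) : ℕ → ℂ :=
  fun n => if Nat.gcd n M = 1 then (ArithmeticFunction.moebius n : ℂ) else 0

lemma abs_mu_le (n : ℕ) : ‖((ArithmeticFunction.moebius n : ℤ) : ℂ)‖ ≤ 1 := by
  rw [Complex.norm_intCast]
  exact_mod_cast ArithmeticFunction.abs_moebius_le_one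

lemma Zind_summable {M : ℕ} {u : ℂ} (hu : 1 < u.re) : LSeriesSummable (Zind M) u := by
  refine LSeriesSummable_of_bounded_of_one_lt_re (m := 1) (fun n _ => ?_) hu
  unfold Zind
  split <;> simp

lemma muind_summable {M : ℕ} {u : ℂ} (hu : 1 < u.re) : LSeriesSummable (muind M) u := by
  refine LSeriesSummable_of_bounded_of_one_lt_re (m := 1) (fun n _ => ?_) hu
  unfold muind
  split
  · exact abs_mu_le n
  · simp

lemma one_sub_cpow_ne {p : ℕ} (hp : 2 ≤ p) {u : ℂ} (hu : 0 < u.re) :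
    1 - (p : ℂ) ^ (-u) ≠ 0 := by
  intro h
  have heq : (p : ℂ) ^ (-u) = 1 := by linear_combination -h
  have h1 : ‖(p : ℂ) ^ (-u)‖ = 1 := by rw [heq]; simp
  rw [Complex.norm_natCast_cpow_of_pos (by omega) _] at h1
  have hlt : ((p : ℝ)) ^ (-u).re < 1 := by
    refine Real.rpow_lt_one_of_one_lt_of_neg ?_ ?_
    · exact_mod_cast Nat.lt_of_lt_of_le Nat.one_lt_two hp
    · simpa using hu
  rw [h1] at hlt
  exact lt_irrefl 1 hlt

lemma squarefree_prod_primes {S : Finset ℕ} (hS : ∀ p ∈ S, p.Prime) :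
    Squarefree (∏ p ∈ S, p) := by
  classical
  rw [Nat.squarefree_iff_prime_squarefree]
  intro p hp hdvd
  have np : p.Prime := hp
  have hp1 : p ∣ ∏ q ∈ S, q := (dvd_mul_right p p).trans hdvd
  obtain ⟨q, hq, hpq⟩ := (np.prime.dvd_finset_prod_iff _).mp hp1
  have hqp : q = p := ((hS q hq).dvd_iff_eq np.ne_one).mp hpq
  subst hqp
  rw [← Finset.mul_prod_erase S _ hq] at hdvd
  have h2 : q ∣ ∏ x ∈ S.erase q, x := by
    rcases hdvd with ⟨c, hc⟩
    have := hc
    have hq0 : 0 < q := np.pos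
    refine ⟨c, ?_⟩
    have := Nat.eq_of_mul_eq_mul_left hq0 (by linarith [hc] : q * (q * c) = q * ∏ x ∈ S.erase q, x).symm
    omega
  obtain ⟨r, hr, hqr⟩ := (np.prime.dvd_finset_prod_iff _).mp h2
  have : r = q := ((hS r (Finset.mem_of_mem_erase hr)).dvd_iff_eq np.ne_one).mp hqr
  subst this
  exact (Finset.ne_of_mem_erase hr) rfl

/-- The arithmetic function `d ↦ d^c` (with value `0` at `0`). -/
noncomputable def cpowAF (c : ℂ) : ArithmeticFunction ℂ :=
  ⟨fun d => if d = 0 then 0 else (d : ℂ) ^ c, if_pos rfl⟩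

lemma cpowAF_apply (c : ℂ) {d : ℕ} (hd : d ≠ 0) : cpowAF c d = (d : ℂ) ^ c := by
  simp [cpowAF, hd]

lemma cpowAF_mult (c : ℂ) : (cpowAF c).IsMultiplicative := by
  constructor
  · simp [cpowAF]
  · intro m n hmn
    rcases eq_or_ne m 0 with rfl | hm
    · simp [cpowAF]
    rcases eq_or_ne n 0 with rfl | hn
    · simp [cpowAF]
    rw [cpowAF_apply c (Nat.mul_ne_zero hm hn), cpowAF_apply c hm, cpowAF_apply c hn,
      Nat.cast_mul, ← natCast_mul_natCast_cpow]

lemma sum_moebius_cpow {M : ℕ} (hM : M ≠ 0) (c : ℂ) :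
    ∑ d ∈ M.divisors, (ArithmeticFunction.moebius d : ℂ) * (d : ℂ) ^ c
      = ∏ p ∈ M.primeFactors, (1 - (p : ℂ) ^ c) := by
  classical
  set r := ∏ p ∈ M.primeFactors, p with hr
  have hprimes : ∀ p ∈ M.primeFactors, p.Prime := fun p hp => Nat.prime_of_mem_primeFactors hp
  have hrsq : Squarefree r := squarefree_prod_primes hprimes
  have hrfac : r.primeFactors = M.primeFactors := Nat.primeFactors_prod hprimes
  have hrdvd : r ∣ M := Nat.prod_primeFactors_dvd M
  have hsub : r.divisors ⊆ M.divisors := Nat.divisors_subset_of_dvd hM hrdvd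
  have h1 : ∑ d ∈ M.divisors, (ArithmeticFunction.moebius d : ℂ) * (d : ℂ) ^ c
      = ∑ d ∈ r.divisors, (ArithmeticFunction.moebius d : ℂ) * (d : ℂ) ^ c := by
    refine (Finset.sum_subset hsub ?_).symm
    intro d hdM hdr
    by_cases hdsq : Squarefree d
    · exfalso
      apply hdr
      rw [Nat.mem_divisors]
      refine ⟨?_, hrsq.ne_zero⟩
      have hmono : d.primeFactors ⊆ M.primeFactors :=
        Nat.primeFactors_mono (Nat.dvd_of_mem_divisors hdM) hM
      calc d = ∏ p ∈ d.primeFactors, p := (Nat.prod_primeFactors_of_squarefree hdsq).symm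
        _ ∣ ∏ p ∈ M.primeFactors, p := Finset.prod_dvd_prod_of_subset _ _ _ hmono
    · rw [ArithmeticFunction.moebius_eq_zero_of_not_squarefree hdsq]
      simp
  have h2 := (ArithmeticFunction.IsMultiplicative.prodPrimeFactors_one_sub_of_squarefree
      (cpowAF c) (cpowAF_mult c) hrsq).symm
  rw [h1, ← hrfac]
  rw [show ∑ d ∈ r.divisors, (ArithmeticFunction.moebius d : ℂ) * (d : ℂ) ^ c
      = ∑ d ∈ r.divisors, (ArithmeticFunction.moebius d : ℂ) * cpowAF c d from
    Finset.sum_congr rfl fun d hd => by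
      rw [cpowAF_apply c (Nat.pos_of_mem_divisors hd).ne']]
  rw [h2]
  refine Finset.prod_congr rfl fun p hp => ?_
  rw [cpowAF_apply c (Nat.prime_of_mem_primeFactors (hrfac ▸ hp)).ne_zero]

lemma sum_moebius_divisors (K : ℕ) :
    ∑ e ∈ K.divisors, (ArithmeticFunction.moebius e : ℂ) = if K = 1 then 1 else 0 := by
  have h := congrArg (fun f : ArithmeticFunction ℂ => f K)
    (ArithmeticFunction.coe_moebius_mul_coe_zeta (R := ℂ))
  simp only [ArithmeticFunction.coe_mul_zeta_apply, ArithmeticFunction.one_apply] at h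
  simpa [ArithmeticFunction.intCoe_apply] using h

lemma LSeries_Zind_eq {M : ℕ} (hM : M ≠ 0) {u : ℂ} (hu : 1 < u.re) :
    LSeries (Zind M) u
      = riemannZeta u * ∏ p ∈ M.primeFactors, (1 - (p : ℂ) ^ (-u)) := by
  classical
  set md : ℕ → ℂ := fun e => if e ∣ M then (ArithmeticFunction.moebius e : ℂ) else 0 with hmd
  have hmdsum : LSeriesSummable md u := by
    refine LSeriesSummable_of_bounded_of_one_lt_re (m := 1) (fun n _ => ?_) hu
    simp only [hmd]
    split
    · exact abs_mu_le n
    · simp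
  have hconv : ∀ {n : ℕ}, n ≠ 0 → Zind M n = (md ⍟ (1 : ℕ → ℂ)) n := by
    intro n hn
    rw [LSeries.convolution_def]
    simp only [Pi.one_apply, mul_one]
    rw [Nat.sum_divisorsAntidiagonal (f := fun i _ => md i)]
    have hfil : ∑ i ∈ n.divisors, md i
        = ∑ i ∈ (Nat.gcd n M).divisors, (ArithmeticFunction.moebius i : ℂ) := by
      rw [hmd]
      rw [Finset.sum_ite, Finset.sum_const_zero, add_zero]
      refine Finset.sum_congr ?_ fun i _ => rfl
      ext i
      simp only [Finset.mem_filter, Nat.mem_divisors]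
      constructor
      · rintro ⟨⟨h1, -⟩, h2⟩
        exact ⟨Nat.dvd_gcd h1 h2, Nat.gcd_ne_zero_left hn⟩
      · rintro ⟨h1, -⟩
        exact ⟨⟨h1.trans (Nat.gcd_dvd_left _ _), hn⟩, h1.trans (Nat.gcd_dvd_right _ _)⟩
    rw [hfil, sum_moebius_divisors]
    rfl
  calc LSeries (Zind M) u = LSeries (md ⍟ (1 : ℕ → ℂ)) u := LSeries_congr hconv u
    _ = LSeries md u * LSeries (1 : ℕ → ℂ) u :=
        LSeries_convolution' hmdsum (LSeriesSummable_one_iff.mpr hu)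
    _ = riemannZeta u * ∏ p ∈ M.primeFactors, (1 - (p : ℂ) ^ (-u)) := by
        rw [LSeries_one_eq_riemannZeta hu]
        have hmdL : LSeries md u
            = ∑ d ∈ M.divisors, (ArithmeticFunction.moebius d : ℂ) * (d : ℂ) ^ (-u) := by
          rw [LSeries]
          rw [tsum_eq_sum (s := M.divisors) ?_]
          · refine Finset.sum_congr rfl fun d hd => ?_
            have hd0 : d ≠ 0 := (Nat.pos_of_mem_divisors hd).ne'
            rw [LSeries.term_of_ne_zero hd0, hmd]
            simp only [if_pos (Nat.dvd_of_mem_divisors hd)]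
            rw [cpow_neg, div_eq_mul_inv]
          · intro b hb
            rcases eq_or_ne b 0 with rfl | hb0
            · exact LSeries.term_zero ..
            · rw [LSeries.term_of_ne_zero hb0]
              have hmdb : md b = 0 := by
                simp only [hmd]
                exact if_neg fun hdvd => hb (Nat.mem_divisors.mpr ⟨hdvd, hM⟩)
              rw [hmdb, zero_div]
        rw [hmdL, sum_moebius_cpow hM (-u), mul_comm]

lemma LSeries_muind_eq {M : ℕ} (hM : M ≠ 0) {u : ℂ} (hu : 1 < u.re) :
    LSeries (muind M) u
      = (riemannZeta u * ∏ p ∈ M.primeFactors, (1 - (p : ℂ) ^ (-u)))⁻¹ := by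
  classical
  have key : LSeries (muind M) u * LSeries (Zind M) u = 1 := by
    rw [← LSeries_convolution' (muind_summable hu) (Zind_summable hu)]
    have hd : ∀ {n : ℕ}, n ≠ 0 → (muind M ⍟ Zind M) n = LSeries.delta n := by
      intro n hn
      rw [LSeries.convolution_def]
      simp only [LSeries.delta]
      by_cases hcop : Nat.gcd n M = 1
      · rw [Nat.sum_divisorsAntidiagonal (f := fun i j => muind M i * Zind M j)]
        have hterm : ∀ i ∈ n.divisors,
            muind M i * Zind M (n / i) = (ArithmeticFunction.moebius i : ℂ) := by
          intro i hi
          have h1 : Nat.gcd i M = 1 :=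
            Nat.Coprime.coprime_dvd_left (Nat.dvd_of_mem_divisors hi) hcop
          have h2 : Nat.gcd (n / i) M = 1 :=
            Nat.Coprime.coprime_dvd_left (Nat.div_dvd_of_dvd (Nat.dvd_of_mem_divisors hi)) hcop
          simp only [muind, Zind, if_pos h1, if_pos h2, mul_one]
        rw [Finset.sum_congr rfl hterm, sum_moebius_divisors]
      · have hn1 : n ≠ 1 := fun h => hcop (by simp [h])
        rw [if_neg hn1]
        refine Finset.sum_eq_zero fun p hp => ?_
        obtain ⟨hpd, -⟩ := Nat.mem_divisorsAntidiagonal.mp hp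
        by_cases h1 : Nat.gcd p.1 M = 1
        · by_cases h2 : Nat.gcd p.2 M = 1
          · exact absurd (hpd ▸ Nat.Coprime.mul h1 h2) hcop
          · simp [Zind, h2]
        · simp [muind, h1]
    rw [LSeries_congr hd u, LSeries_delta, Pi.one_apply]
  have hne : riemannZeta u * ∏ p ∈ M.primeFactors, (1 - (p : ℂ) ^ (-u)) ≠ 0 := by
    refine mul_ne_zero (riemannZeta_ne_zero_of_one_lt_re hu) ?_
    rw [Finset.prod_ne_zero_iff]
    intro p hp
    exact one_sub_cpow_ne (Nat.prime_of_mem_primeFactors hp).two_le (by linarith)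
  rw [LSeries_Zind_eq hM hu] at key
  exact eq_inv_of_mul_eq_one_left key

lemma sum_g_divisors (s : ℂ) {K : ℕ} (hK : K ≠ 0) :
    ∑ d ∈ K.divisors, (∑ e ∈ d.divisors,
        (ArithmeticFunction.moebius e : ℂ) * ((d / e : ℕ) : ℂ) ^ ((1 : ℂ) - s))
      = (K : ℂ) ^ ((1 : ℂ) - s) := by
  classical
  have hg : ∀ d : ℕ, d ≠ 0 →
      (∑ e ∈ d.divisors, (ArithmeticFunction.moebius e : ℂ) * ((d / e : ℕ) : ℂ) ^ ((1 : ℂ) - s))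
        = ((ArithmeticFunction.moebius : ArithmeticFunction ℤ) * cpowAF ((1 : ℂ) - s)) d := by
    intro d hd
    rw [ArithmeticFunction.mul_apply,
      Nat.sum_divisorsAntidiagonal
        (f := fun i j => ((ArithmeticFunction.moebius : ArithmeticFunction ℤ) :
          ArithmeticFunction ℂ) i * cpowAF ((1 : ℂ) - s) j)]
    refine Finset.sum_congr rfl fun e he => ?_
    have he' : e ∣ d := Nat.dvd_of_mem_divisors he
    have hde : d / e ≠ 0 := by
      have := Nat.div_dvd_of_dvd he'
      intro h0
      rcases this with ⟨c, hc⟩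
      rw [h0, zero_mul] at hc
      exact hd hc
    rw [ArithmeticFunction.intCoe_apply, cpowAF_apply _ hde]
  have hsum : ∑ d ∈ K.divisors, (∑ e ∈ d.divisors,
      (ArithmeticFunction.moebius e : ℂ) * ((d / e : ℕ) : ℂ) ^ ((1 : ℂ) - s))
      = ∑ d ∈ K.divisors,
        ((ArithmeticFunction.moebius : ArithmeticFunction ℤ) * cpowAF ((1 : ℂ) - s)) d :=
    Finset.sum_congr rfl fun d hd => hg d (Nat.pos_of_mem_divisors hd).ne'
  rw [hsum, ← ArithmeticFunction.coe_mul_zeta_apply]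
  have hring : ((ArithmeticFunction.moebius : ArithmeticFunction ℤ) * cpowAF ((1 : ℂ) - s))
      * (ArithmeticFunction.zeta : ArithmeticFunction ℕ) = cpowAF ((1 : ℂ) - s) := by
    rw [mul_comm ((ArithmeticFunction.moebius : ArithmeticFunction ℤ) : ArithmeticFunction ℂ)
      (cpowAF ((1 : ℂ) - s)), mul_assoc, ArithmeticFunction.coe_moebius_mul_coe_zeta, mul_one]
  rw [hring, cpowAF_apply _ hK]

end Stmt10

open Stmt10 LSeries
open scoped LSeries.notation

set_option maxHeartbeats 1600000
/-- the Dirichlet series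
`∑_{m₁,n₁ ≥ 1, (m₁,b/k)=1, (n₁,a/ℓ)=1} gcd(m₁,n₁)^{1−s} m₁^{−1−w} n₁^{−1−z}`
factors as a product of zeta factors times finite Euler products. -/
theorem stmt_10 (a b k l : ℕ) (ha : 0 < a) (hb : 0 < b) (hab : Nat.gcd a b = 1)
    (hk : k ∣ b) (hl : l ∣ a) (w z s : ℂ)
    (hw : 0 < w.re) (hz : 0 < z.re) (hwzs : 0 < (w + z + s).re) :
    (∑' m₁ : ℕ, ∑' n₁ : ℕ,
      if 1 ≤ m₁ ∧ 1 ≤ n₁ ∧ Nat.gcd m₁ (b / k) = 1 ∧ Nat.gcd n₁ (a / l) = 1 then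
        ((Nat.gcd m₁ n₁ : ℂ) ^ ((1 : ℂ) - s)) * (m₁ : ℂ) ^ (-1 - w) * (n₁ : ℂ) ^ (-1 - z)
      else 0)
    = riemannZeta (1 + w + z + s) * riemannZeta (1 + w) * riemannZeta (1 + z) /
        riemannZeta (2 + w + z) *
      (∏ p ∈ (a / l).primeFactors, cP p (w + z + s) z (w + z)) *
      (∏ p ∈ (b / k).primeFactors, cP p (w + z + s) w (w + z)) := by
  classical
  have hab' : Nat.Coprime a b := hab
  have hl0 : 0 < l := Nat.pos_of_dvd_of_pos hl ha
  have hk0 : 0 < k := Nat.pos_of_dvd_of_pos hk hb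
  have hA : a / l ≠ 0 := (Nat.div_pos (Nat.le_of_dvd ha hl) hl0).ne'
  have hB : b / k ≠ 0 := (Nat.div_pos (Nat.le_of_dvd hb hk) hk0).ne'
  set A := a / l with hAdef
  set B := b / k with hBdef
  have hAB : Nat.Coprime A B :=
    Nat.Coprime.coprime_dvd_left (Nat.div_dvd_of_dvd hl)
      (Nat.Coprime.coprime_dvd_right (Nat.div_dvd_of_dvd hk) hab')
  set M₀ := A * B with hM₀def
  have hM₀ : M₀ ≠ 0 := Nat.mul_ne_zero hA hB
  -- real-part estimates
  have hre2 : (1 : ℝ) < (2 + w + z : ℂ).re := by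
    simp only [Complex.add_re, Complex.re_ofNat]; linarith
  have hwzs' : 0 < w.re + z.re + s.re := by
    simpa only [Complex.add_re] using hwzs
  have hre1 : (1 : ℝ) < (1 + w + z + s : ℂ).re := by
    simp only [Complex.add_re, Complex.one_re]; linarith
  have hrew : (1 : ℝ) < (1 + w : ℂ).re := by
    simp only [Complex.add_re, Complex.one_re]; linarith
  have hrez : (1 : ℝ) < (1 + z : ℂ).re := by
    simp only [Complex.add_re, Complex.one_re]; linarith
  -- the building blocks
  set f2 : ℕ → ℂ := fun n => if Nat.gcd n M₀ = 1 then (n : ℂ) ^ ((1 : ℂ) - s) else 0 with hf2def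
  set gg : ℕ → ℂ := fun d => ∑ e ∈ d.divisors,
      (ArithmeticFunction.moebius e : ℂ) * ((d / e : ℕ) : ℂ) ^ ((1 : ℂ) - s) with hggdef
  set Dt : ℕ → ℂ := LSeries.term (muind M₀ ⍟ f2) (2 + w + z) with hDtdef
  set Mt : ℕ → ℂ := LSeries.term (Zind B) (1 + w) with hMtdef
  set Nt : ℕ → ℂ := LSeries.term (Zind A) (1 + z) with hNtdef
  -- `f2` has the same L-series data at `2+w+z` as `Zind M₀` at `1+w+z+s`
  have hterm2 : LSeries.term f2 (2 + w + z) = LSeries.term (Zind M₀) (1 + w + z + s) := by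
    funext n
    rcases eq_or_ne n 0 with rfl | hn
    · rw [LSeries.term_zero, LSeries.term_zero]
    · rw [LSeries.term_of_ne_zero hn, LSeries.term_of_ne_zero hn]
      have hn0 : (n : ℂ) ≠ 0 := Nat.cast_ne_zero.mpr hn
      simp only [hf2def, Zind]
      split
      · rw [← cpow_sub _ _ hn0,
          show (1 : ℂ) - s - (2 + w + z) = -(1 + w + z + s) by ring, cpow_neg, one_div]
      · rw [zero_div, zero_div]
  have hf2sum : LSeriesSummable f2 (2 + w + z) := by
    unfold LSeriesSummable
    rw [hterm2]
    exact Zind_summable hre1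
  have hf2L : LSeries f2 (2 + w + z) = LSeries (Zind M₀) (1 + w + z + s) := by
    unfold LSeries
    rw [hterm2]
  -- the convolution `muind M₀ ⍟ f2` is the coprime-restriction of `gg`
  have hconv : ∀ d : ℕ, d ≠ 0 →
      (muind M₀ ⍟ f2) d = if Nat.gcd d M₀ = 1 then gg d else 0 := by
    intro d hd
    simp only [LSeries.convolution_def]
    by_cases hcop : Nat.gcd d M₀ = 1
    · rw [if_pos hcop, Nat.sum_divisorsAntidiagonal (f := fun i j => muind M₀ i * f2 j), hggdef]
      refine Finset.sum_congr rfl fun e he => ?_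
      have h1 : Nat.gcd e M₀ = 1 :=
        Nat.Coprime.coprime_dvd_left (Nat.dvd_of_mem_divisors he) hcop
      have h2 : Nat.gcd (d / e) M₀ = 1 :=
        Nat.Coprime.coprime_dvd_left (Nat.div_dvd_of_dvd (Nat.dvd_of_mem_divisors he)) hcop
      simp only [muind, hf2def, if_pos h1, if_pos h2]
    · rw [if_neg hcop]
      refine Finset.sum_eq_zero fun p hp => ?_
      obtain ⟨hpd, -⟩ := Nat.mem_divisorsAntidiagonal.mp hp
      by_cases h1 : Nat.gcd p.1 M₀ = 1
      · by_cases h2 : Nat.gcd p.2 M₀ = 1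
        · exact absurd (hpd ▸ Nat.Coprime.mul h1 h2) hcop
        · simp [hf2def, h2]
      · simp [muind, h1]
  -- summability of the three factors
  have hDt : Summable Dt := (muind_summable hre2).convolution hf2sum
  have hMt : Summable Mt := Zind_summable hrew
  have hNt : Summable Nt := Zind_summable hrez
  have hMN : Summable (fun p : ℕ × ℕ => Mt p.1 * Nt p.2) :=
    summable_mul_of_summable_norm hMt.norm hNt.norm
  have hQ : Summable (fun q : ℕ × ℕ × ℕ => Dt q.1 * (Mt q.2.1 * Nt q.2.2)) :=
    summable_mul_of_summable_norm (f := Dt) (g := fun p : ℕ × ℕ => Mt p.1 * Nt p.2)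
      hDt.norm hMN.norm
  have hQval : ∑' q : ℕ × ℕ × ℕ, Dt q.1 * (Mt q.2.1 * Nt q.2.2)
      = (∑' d, Dt d) * ((∑' m, Mt m) * (∑' n, Nt n)) := by
    rw [tsum_mul_tsum_of_summable_norm (f := Mt) (g := Nt) hMt.norm hNt.norm,
      tsum_mul_tsum_of_summable_norm (f := Dt) (g := fun p : ℕ × ℕ => Mt p.1 * Nt p.2)
        hDt.norm hMN.norm]
  -- explicit values of the three factors
  have hDt' : ∀ d : ℕ, d ≠ 0 →
      Dt d = if Nat.gcd d M₀ = 1 then gg d * (d : ℂ) ^ (-(2 + w + z)) else 0 := by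
    intro d hd
    rw [hDtdef, LSeries.term_of_ne_zero hd, hconv d hd]
    split
    · rw [cpow_neg, div_eq_mul_inv]
    · rw [zero_div]
  have hMt' : ∀ m : ℕ, Mt m = if 1 ≤ m ∧ Nat.gcd m B = 1 then (m : ℂ) ^ (-(1 + w)) else 0 := by
    intro m
    rcases eq_or_ne m 0 with rfl | hm
    · rw [hMtdef, LSeries.term_zero, if_neg (by simp)]
    · rw [hMtdef, LSeries.term_of_ne_zero hm]
      simp only [Zind]
      by_cases hg : Nat.gcd m B = 1
      · rw [if_pos hg, if_pos ⟨Nat.one_le_iff_ne_zero.mpr hm, hg⟩, cpow_neg, one_div]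
      · rw [if_neg hg, if_neg (by tauto), zero_div]
  have hNt' : ∀ n : ℕ, Nt n = if 1 ≤ n ∧ Nat.gcd n A = 1 then (n : ℂ) ^ (-(1 + z)) else 0 := by
    intro n
    rcases eq_or_ne n 0 with rfl | hn
    · rw [hNtdef, LSeries.term_zero, if_neg (by simp)]
    · rw [hNtdef, LSeries.term_of_ne_zero hn]
      simp only [Zind]
      by_cases hg : Nat.gcd n A = 1
      · rw [if_pos hg, if_pos ⟨Nat.one_le_iff_ne_zero.mpr hn, hg⟩, cpow_neg, one_div]
      · rw [if_neg hg, if_neg (by tauto), zero_div]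
  -- the triple-indexed function
  set R : ℕ × ℕ × ℕ → ℂ := fun q =>
    if 1 ≤ q.1 ∧ q.1 ∣ q.2.1 ∧ q.1 ∣ q.2.2 ∧ 1 ≤ q.2.1 ∧ 1 ≤ q.2.2 ∧
        Nat.gcd q.2.1 B = 1 ∧ Nat.gcd q.2.2 A = 1
      then gg q.1 * (q.2.1 : ℂ) ^ (-1 - w) * (q.2.2 : ℂ) ^ (-1 - z) else 0 with hRdef
  set j : ℕ × ℕ × ℕ → ℕ × ℕ × ℕ :=
    fun q => (q.1 + 1, (q.1 + 1) * q.2.1, (q.1 + 1) * q.2.2) with hjdef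
  have hjinj : Function.Injective j := by
    rintro ⟨d, m, n⟩ ⟨d', m', n'⟩ h
    simp only [hjdef, Prod.mk.injEq] at h
    obtain ⟨h1, h2, h3⟩ := h
    have hd : d = d' := by omega
    subst hd
    have hm : m = m' := Nat.eq_of_mul_eq_mul_left (Nat.succ_pos d) h2
    have hn : n = n' := Nat.eq_of_mul_eq_mul_left (Nat.succ_pos d) h3
    simp [hm, hn]
  have hjrange : ∀ x ∉ Set.range j, R x = 0 := by
    intro x hx
    simp only [hRdef]
    rw [if_neg]
    rintro ⟨h1, hd1, hd2, -, -, -, -⟩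
    apply hx
    refine ⟨(x.1 - 1, x.2.1 / x.1, x.2.2 / x.1), ?_⟩
    have hx1 : x.1 - 1 + 1 = x.1 := Nat.succ_pred_eq_of_pos h1
    simp only [hjdef]
    rw [hx1, Nat.mul_div_cancel' hd1, Nat.mul_div_cancel' hd2]
  have hcomp : ∀ q : ℕ × ℕ × ℕ, R (j q) = Dt (q.1 + 1) * (Mt q.2.1 * Nt q.2.2) := by
    rintro ⟨d, m, n⟩
    have hd0 : d + 1 ≠ 0 := Nat.succ_ne_zero d
    have hdc0 : ((d + 1 : ℕ) : ℂ) ≠ 0 := Nat.cast_ne_zero.mpr hd0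
    rw [hDt' (d + 1) hd0, hMt' m, hNt' n]
    simp only [hRdef, hjdef]
    have hcond : (1 ≤ d + 1 ∧ (d + 1) ∣ (d + 1) * m ∧ (d + 1) ∣ (d + 1) * n ∧
        1 ≤ (d + 1) * m ∧ 1 ≤ (d + 1) * n ∧
        Nat.gcd ((d + 1) * m) B = 1 ∧ Nat.gcd ((d + 1) * n) A = 1)
        ↔ (Nat.gcd (d + 1) M₀ = 1 ∧ ((1 ≤ m ∧ Nat.gcd m B = 1) ∧ (1 ≤ n ∧ Nat.gcd n A = 1))) := by
      constructor
      · rintro ⟨-, -, -, h4, h5, h6, h7⟩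
        have h6' : Nat.Coprime (d + 1) B ∧ Nat.Coprime m B := Nat.coprime_mul_iff_left.mp h6
        have h7' : Nat.Coprime (d + 1) A ∧ Nat.Coprime n A := Nat.coprime_mul_iff_left.mp h7
        have hm0 : m ≠ 0 := by rintro rfl; simp at h4
        have hn0 : n ≠ 0 := by rintro rfl; simp at h5
        exact ⟨Nat.Coprime.mul_right h7'.1 h6'.1,
          ⟨Nat.one_le_iff_ne_zero.mpr hm0, h6'.2⟩, ⟨Nat.one_le_iff_ne_zero.mpr hn0, h7'.2⟩⟩
      · rintro ⟨h1, ⟨hm1, hmB⟩, ⟨hn1, hnA⟩⟩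
        have h1' : Nat.Coprime (d + 1) A ∧ Nat.Coprime (d + 1) B :=
          Nat.coprime_mul_iff_right.mp h1
        refine ⟨Nat.succ_le_succ (Nat.zero_le d), ⟨m, rfl⟩, ⟨n, rfl⟩, ?_, ?_, ?_, ?_⟩
        · exact Nat.one_le_iff_ne_zero.mpr
            (Nat.mul_ne_zero hd0 (Nat.one_le_iff_ne_zero.mp hm1))
        · exact Nat.one_le_iff_ne_zero.mpr
            (Nat.mul_ne_zero hd0 (Nat.one_le_iff_ne_zero.mp hn1))
        · exact Nat.coprime_mul_iff_left.mpr ⟨h1'.2, hmB⟩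
        · exact Nat.coprime_mul_iff_left.mpr ⟨h1'.1, hnA⟩
    rw [if_congr hcond rfl rfl]
    by_cases h1 : Nat.gcd (d + 1) M₀ = 1
    · by_cases h2 : 1 ≤ m ∧ Nat.gcd m B = 1
      · by_cases h3 : 1 ≤ n ∧ Nat.gcd n A = 1
        · rw [if_pos ⟨h1, h2, h3⟩, if_pos h1, if_pos h2, if_pos h3]
          rw [Nat.cast_mul, Nat.cast_mul, natCast_mul_natCast_cpow, natCast_mul_natCast_cpow]
          simp only [show (-1 - w : ℂ) = -(1 + w) from by ring,
            show (-1 - z : ℂ) = -(1 + z) from by ring]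
          rw [show (-(2 + w + z) : ℂ) = -(1 + w) + -(1 + z) from by ring,
            cpow_add _ _ hdc0]
          ring
        · rw [if_neg (fun hc => h3 hc.2.2), if_neg h3]; ring
      · rw [if_neg (fun hc => h2 hc.2.1), if_neg h2]; ring
    · rw [if_neg (fun hc => h1 hc.1), if_neg h1]; ring
  have hC1 : ∀ p : ℕ × ℕ,
      (if 1 ≤ p.1 ∧ 1 ≤ p.2 ∧ Nat.gcd p.1 B = 1 ∧ Nat.gcd p.2 A = 1 then
        ((Nat.gcd p.1 p.2 : ℂ) ^ ((1 : ℂ) - s)) * (p.1 : ℂ) ^ (-1 - w) * (p.2 : ℂ) ^ (-1 - z)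
      else 0) = ∑' d : ℕ, R (d, p.1, p.2) := by
    rintro ⟨m, n⟩
    by_cases hc : 1 ≤ m ∧ 1 ≤ n ∧ Nat.gcd m B = 1 ∧ Nat.gcd n A = 1
    · rw [if_pos hc]
      obtain ⟨hm1, hn1, hmB, hnA⟩ := hc
      have hK : Nat.gcd m n ≠ 0 := Nat.gcd_ne_zero_left (Nat.one_le_iff_ne_zero.mp hm1)
      rw [tsum_eq_sum (s := (Nat.gcd m n).divisors)
        (f := fun d : ℕ => R (d, m, n)) ?_]
      · have hcg : ∀ d ∈ (Nat.gcd m n).divisors,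
            R (d, m, n) = gg d * (m : ℂ) ^ (-1 - w) * (n : ℂ) ^ (-1 - z) := by
          intro d hd
          have hdd : d ∣ Nat.gcd m n := Nat.dvd_of_mem_divisors hd
          simp only [hRdef]
          rw [if_pos ⟨Nat.pos_of_mem_divisors hd, hdd.trans (Nat.gcd_dvd_left m n),
            hdd.trans (Nat.gcd_dvd_right m n), hm1, hn1, hmB, hnA⟩]
        rw [Finset.sum_congr rfl hcg, ← Finset.sum_mul, ← Finset.sum_mul]
        simp only [hggdef]
        rw [sum_g_divisors s hK]
      · intro d hd
        simp only [hRdef]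
        rw [if_neg]
        rintro ⟨hd1, hdm, hdn, -⟩
        exact hd (Nat.mem_divisors.mpr ⟨Nat.dvd_gcd hdm hdn, hK⟩)
    · rw [if_neg hc]
      symm
      have hzz : ∀ d : ℕ, R (d, m, n) = 0 := by
        intro d
        simp only [hRdef]
        rw [if_neg]
        rintro ⟨-, -, -, h4, h5, h6, h7⟩
        exact hc ⟨h4, h5, h6, h7⟩
      simp only [hzz, tsum_zero]
  -- second injection: shift in the first coordinate only
  set j' : ℕ × ℕ × ℕ → ℕ × ℕ × ℕ := fun q => (q.1 + 1, q.2) with hj'def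
  have hj'inj : Function.Injective j' := by
    rintro ⟨d, p⟩ ⟨d', p'⟩ h
    simp only [hj'def, Prod.mk.injEq] at h
    exact Prod.ext_iff.mpr ⟨by omega, h.2⟩
  have hRj : ∀ q : ℕ × ℕ × ℕ,
      R (j q) = ((fun q : ℕ × ℕ × ℕ => Dt q.1 * (Mt q.2.1 * Nt q.2.2)) ∘ j') q := hcomp
  have hQj' : Summable ((fun q : ℕ × ℕ × ℕ => Dt q.1 * (Mt q.2.1 * Nt q.2.2)) ∘ j') :=
    hQ.comp_injective hj'inj
  have hRsum : Summable R := by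
    refine (hjinj.summable_iff hjrange).mp ?_
    exact (summable_congr fun q => (hRj q)).mpr hQj'
  have hQvanish : ∀ x ∉ Set.range j',
      (fun q : ℕ × ℕ × ℕ => Dt q.1 * (Mt q.2.1 * Nt q.2.2)) x = 0 := by
    intro x hx
    have hx1 : x.1 = 0 := by
      by_contra h0
      exact hx ⟨(x.1 - 1, x.2), by
        simp only [hj'def]
        rw [show x.1 - 1 + 1 = x.1 from by omega]⟩
    have hDt0 : Dt x.1 = 0 := by rw [hx1, hDtdef]; exact LSeries.term_zero ..
    simp only [hDt0, zero_mul]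
  have htsumR : ∑' q : ℕ × ℕ × ℕ, R q
      = (∑' d, Dt d) * ((∑' m, Mt m) * (∑' n, Nt n)) := by
    rw [← hjinj.tsum_eq (Function.support_subset_iff'.mpr hjrange), tsum_congr hRj]
    exact (hj'inj.tsum_eq (Function.support_subset_iff'.mpr hQvanish)).trans hQval
  have hRe : Summable (R ∘ ⇑(Equiv.prodComm (ℕ × ℕ) ℕ)) :=
    (Equiv.prodComm (ℕ × ℕ) ℕ).summable_iff.mpr hRsum
  have hFsum : Summable (fun p : ℕ × ℕ => ∑' d : ℕ, R (d, p.1, p.2)) := hRe.prod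
  have hFsum' : Summable (fun p : ℕ × ℕ =>
      if 1 ≤ p.1 ∧ 1 ≤ p.2 ∧ Nat.gcd p.1 B = 1 ∧ Nat.gcd p.2 A = 1 then
        ((Nat.gcd p.1 p.2 : ℂ) ^ ((1 : ℂ) - s)) * (p.1 : ℂ) ^ (-1 - w) * (p.2 : ℂ) ^ (-1 - z)
      else 0) := hFsum.congr fun p => (hC1 p).symm
  calc (∑' m₁ : ℕ, ∑' n₁ : ℕ,
      if 1 ≤ m₁ ∧ 1 ≤ n₁ ∧ Nat.gcd m₁ B = 1 ∧ Nat.gcd n₁ A = 1 then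
        ((Nat.gcd m₁ n₁ : ℂ) ^ ((1 : ℂ) - s)) * (m₁ : ℂ) ^ (-1 - w) * (n₁ : ℂ) ^ (-1 - z)
      else 0)
      = ∑' p : ℕ × ℕ,
        (if 1 ≤ p.1 ∧ 1 ≤ p.2 ∧ Nat.gcd p.1 B = 1 ∧ Nat.gcd p.2 A = 1 then
          ((Nat.gcd p.1 p.2 : ℂ) ^ ((1 : ℂ) - s)) * (p.1 : ℂ) ^ (-1 - w) * (p.2 : ℂ) ^ (-1 - z)
        else 0) := (Summable.tsum_prod' hFsum' fun b => hFsum'.prod_factor b).symm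
    _ = ∑' p : ℕ × ℕ, ∑' d : ℕ, R (d, p.1, p.2) := tsum_congr hC1
    _ = ∑' x : (ℕ × ℕ) × ℕ, (R ∘ ⇑(Equiv.prodComm (ℕ × ℕ) ℕ)) x :=
        (Summable.tsum_prod' hRe fun b => hRe.prod_factor b).symm
    _ = ∑' q : ℕ × ℕ × ℕ, R q := (Equiv.prodComm (ℕ × ℕ) ℕ).tsum_eq R
    _ = (∑' d, Dt d) * ((∑' m, Mt m) * (∑' n, Nt n)) := htsumR
    _ = (riemannZeta (2 + w + z) * ∏ p ∈ M₀.primeFactors, (1 - (p : ℂ) ^ (-(2 + w + z))))⁻¹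
        * (riemannZeta (1 + w + z + s)
            * ∏ p ∈ M₀.primeFactors, (1 - (p : ℂ) ^ (-(1 + w + z + s))))
        * ((riemannZeta (1 + w) * ∏ p ∈ B.primeFactors, (1 - (p : ℂ) ^ (-(1 + w))))
          * (riemannZeta (1 + z) * ∏ p ∈ A.primeFactors, (1 - (p : ℂ) ^ (-(1 + z))))) := by
        have hD : (∑' d, Dt d)
            = (riemannZeta (2 + w + z)
                * ∏ p ∈ M₀.primeFactors, (1 - (p : ℂ) ^ (-(2 + w + z))))⁻¹
              * (riemannZeta (1 + w + z + s)
                * ∏ p ∈ M₀.primeFactors, (1 - (p : ℂ) ^ (-(1 + w + z + s)))) := by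
          rw [hDtdef]
          show LSeries (muind M₀ ⍟ f2) (2 + w + z) = _
          rw [LSeries_convolution' (muind_summable hre2) hf2sum,
            LSeries_muind_eq hM₀ hre2, hf2L, LSeries_Zind_eq hM₀ hre1]
        have hM : (∑' m, Mt m)
            = riemannZeta (1 + w) * ∏ p ∈ B.primeFactors, (1 - (p : ℂ) ^ (-(1 + w))) := by
          rw [hMtdef]
          show LSeries (Zind B) (1 + w) = _
          exact LSeries_Zind_eq hB hrew
        have hN : (∑' n, Nt n)
            = riemannZeta (1 + z) * ∏ p ∈ A.primeFactors, (1 - (p : ℂ) ^ (-(1 + z))) := by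
          rw [hNtdef]
          show LSeries (Zind A) (1 + z) = _
          exact LSeries_Zind_eq hA hrez
        rw [hD, hM, hN]
    _ = riemannZeta (1 + w + z + s) * riemannZeta (1 + w) * riemannZeta (1 + z) /
          riemannZeta (2 + w + z) *
        (∏ p ∈ A.primeFactors, cP p (w + z + s) z (w + z)) *
        (∏ p ∈ B.primeFactors, cP p (w + z + s) w (w + z)) := by
        have hsplit0 : ∏ p ∈ M₀.primeFactors, (1 - (p : ℂ) ^ (-(2 + w + z)))
            = (∏ p ∈ A.primeFactors, (1 - (p : ℂ) ^ (-(2 + w + z))))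
              * ∏ p ∈ B.primeFactors, (1 - (p : ℂ) ^ (-(2 + w + z))) := by
          rw [hM₀def, Nat.Coprime.primeFactors_mul hAB,
            Finset.prod_union hAB.disjoint_primeFactors]
        have hsplit1 : ∏ p ∈ M₀.primeFactors, (1 - (p : ℂ) ^ (-(1 + w + z + s)))
            = (∏ p ∈ A.primeFactors, (1 - (p : ℂ) ^ (-(1 + w + z + s))))
              * ∏ p ∈ B.primeFactors, (1 - (p : ℂ) ^ (-(1 + w + z + s))) := by
          rw [hM₀def, Nat.Coprime.primeFactors_mul hAB,
            Finset.prod_union hAB.disjoint_primeFactors]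
        have hcPA : ∏ p ∈ A.primeFactors, cP p (w + z + s) z (w + z)
            = (∏ p ∈ A.primeFactors, (1 - (p : ℂ) ^ (-(1 + w + z + s))))
              * (∏ p ∈ A.primeFactors, (1 - (p : ℂ) ^ (-(1 + z))))
              * (∏ p ∈ A.primeFactors, (1 - (p : ℂ) ^ (-(2 + w + z))))⁻¹ := by
          rw [← Finset.prod_inv_distrib, ← Finset.prod_mul_distrib,
            ← Finset.prod_mul_distrib]
          refine Finset.prod_congr rfl fun p _ => ?_
          simp only [cP]
          rw [show (-1 - (w + z + s) : ℂ) = -(1 + w + z + s) from by ring,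
            show (-1 - z : ℂ) = -(1 + z) from by ring,
            show (-2 - (w + z) : ℂ) = -(2 + w + z) from by ring]
        have hcPB : ∏ p ∈ B.primeFactors, cP p (w + z + s) w (w + z)
            = (∏ p ∈ B.primeFactors, (1 - (p : ℂ) ^ (-(1 + w + z + s))))
              * (∏ p ∈ B.primeFactors, (1 - (p : ℂ) ^ (-(1 + w))))
              * (∏ p ∈ B.primeFactors, (1 - (p : ℂ) ^ (-(2 + w + z))))⁻¹ := by
          rw [← Finset.prod_inv_distrib, ← Finset.prod_mul_distrib,
            ← Finset.prod_mul_distrib]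
          refine Finset.prod_congr rfl fun p _ => ?_
          simp only [cP]
          rw [show (-1 - (w + z + s) : ℂ) = -(1 + w + z + s) from by ring,
            show (-1 - w : ℂ) = -(1 + w) from by ring,
            show (-2 - (w + z) : ℂ) = -(2 + w + z) from by ring]
        have hzeta0 : riemannZeta (2 + w + z) ≠ 0 := riemannZeta_ne_zero_of_one_lt_re hre2
        have hprodA : (∏ p ∈ A.primeFactors, (1 - (p : ℂ) ^ (-(2 + w + z)))) ≠ 0 := by
          rw [Finset.prod_ne_zero_iff]
          intro p hp
          exact one_sub_cpow_ne (Nat.prime_of_mem_primeFactors hp).two_le (by linarith)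
        have hprodB : (∏ p ∈ B.primeFactors, (1 - (p : ℂ) ^ (-(2 + w + z)))) ≠ 0 := by
          rw [Finset.prod_ne_zero_iff]
          intro p hp
          exact one_sub_cpow_ne (Nat.prime_of_mem_primeFactors hp).two_le (by linarith)
        rw [hsplit0, hsplit1, hcPA, hcPB]
        field_simp
end

section
/- For every ε > 0 and θ ≥ 0 there is a constant C = C(ε,θ) such that for all T ≥ 2, ∑_{a,b ≤ T^θ} ∑ (a b m₁ m₂ n₁ n₂)^{−1/2} ≤ C T^{θ+2ε}, where the inner sum runs over positive integers m₁, m₂, n₁, n₂ and nonzero integers h satisfying m₁ m₂ n₁ n₂ ≤ T^{2+ε}, a m₁ m₂ − b n₁ n₂ = h, and 0 < |h| ≤ √(a b m₁ m₂ n₁ n₂) · T^{−1+ε}. -/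
/-!
Write `P = a m₁ m₂` and `Q = b n₁ n₂`. By AM–GM, `(PQ)^{-1/2} ≤ (P⁻¹ + Q⁻¹) / 2`, and the
conditions of summation are symmetric under `(a, m₁, m₂) ↔ (b, n₁, n₂)`, so the sum is at most
`∑ P⁻¹ · #{(b, n₁, n₂) : 0 < |Q - P| ≤ H}` with `H = T^{θ+3ε/2}` (since `|h| ≤ √(PQ) T^{-1+ε} ≤ H`),
all variables being at most `K = ⌊T^{θ+2+ε}⌋`. There are at most `2H` admissible values of `Q`, and a
triple with product `Q` is determined by two divisors of `Q`, so each value is hit at most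
`d(Q)² ≪ T^{ε/4}` times by the divisor bound `d(n) ≪_δ n^δ`. Finally
`∑ 1 / (a m₁ m₂) ≤ (1 + log K)³ ≪ T^{ε/4}`.
-/

open Finset

lemma succ_le_mul_pow {r : ℝ} (hr : 1 < r) (k : ℕ) :
    (k + 1 : ℝ) ≤ (1 + (r - 1)⁻¹) * r ^ k := by
  have hr₀ : 0 < r - 1 := sub_pos.2 hr
  have bernoulli : 1 + k * (r - 1) ≤ r ^ k := by
    simpa using one_add_mul_le_pow (a := r - 1) (by linarith) k
  have expand : (1 + (r - 1)⁻¹) * (1 + k * (r - 1)) = k + 1 + (k * (r - 1) + (r - 1)⁻¹) := by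
    field_simp
    ring
  have hrest : 0 ≤ k * (r - 1) + (r - 1)⁻¹ := by positivity
  calc (k + 1 : ℝ) ≤ (1 + (r - 1)⁻¹) * (1 + k * (r - 1)) := by rw [expand]; linarith
    _ ≤ (1 + (r - 1)⁻¹) * r ^ k := by gcongr

lemma succ_le_pow_of_two_le {r : ℝ} (hr : 2 ≤ r) (k : ℕ) : (k + 1 : ℝ) ≤ r ^ k :=
  calc (k + 1 : ℝ) ≤ 2 ^ k := by exact_mod_cast Nat.lt_two_pow_self
    _ ≤ r ^ k := by gcongr

theorem Nat.card_divisors_le_mul_rpow {δ : ℝ} (hδ : 0 < δ) :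
    ∃ C : ℝ, ∀ n : ℕ, n ≠ 0 → (#n.divisors : ℝ) ≤ C * (n : ℝ) ^ δ := by
  have h2δ : 1 < (2 : ℝ) ^ δ := Real.one_lt_rpow (by norm_num) hδ
  set c : ℝ := 1 + ((2 : ℝ) ^ δ - 1)⁻¹
  have hc : 1 ≤ c := le_add_of_nonneg_right (inv_nonneg.2 (by linarith))
  set B : ℕ := ⌈(2 : ℝ) ^ δ⁻¹⌉₊
  refine ⟨c ^ B, fun n hn => ?_⟩
  -- once `p ^ δ ≥ 2`, already `k + 1 ≤ (p ^ δ) ^ k`; each of the fewer than `B` other primes costs `c`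
  have hfactor : ∀ p ∈ n.primeFactors, ((n.factorization p + 1 : ℕ) : ℝ) ≤
      (if p < B then c else 1) * ((p : ℝ) ^ δ) ^ n.factorization p := by
    intro p hp
    have hp2 : (2 : ℝ) ≤ p := by exact_mod_cast (Nat.prime_of_mem_primeFactors hp).two_le
    push_cast
    split_ifs with hpB
    · calc _ ≤ c * ((2 : ℝ) ^ δ) ^ n.factorization p := succ_le_mul_pow h2δ _
        _ ≤ c * ((p : ℝ) ^ δ) ^ n.factorization p := by gcongr
    · rw [one_mul]
      refine succ_le_pow_of_two_le ?_ _
      calc (2 : ℝ) = ((2 : ℝ) ^ δ⁻¹) ^ δ := (Real.rpow_inv_rpow (by norm_num) hδ.ne').symm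
        _ ≤ (B : ℝ) ^ δ := by gcongr; exact Nat.le_ceil _
        _ ≤ (p : ℝ) ^ δ := by gcongr; exact_mod_cast not_lt.1 hpB
  have hn_rpow : (n : ℝ) ^ δ = ∏ p ∈ n.primeFactors, ((p : ℝ) ^ δ) ^ n.factorization p := by
    conv_lhs => rw [Nat.prod_primeFactors_pow_factorization hn]
    push_cast
    rw [← Real.finsetProd_rpow _ _ fun p _ => by positivity]
    exact prod_congr rfl fun p _ => (Real.rpow_pow_comm (by positivity) _ _).symm
  have hsmall : #{p ∈ n.primeFactors | p < B} ≤ B :=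
    (card_le_card fun p hp => mem_range.2 (mem_filter.1 hp).2).trans (card_range B).le
  calc (#n.divisors : ℝ) = ∏ p ∈ n.primeFactors, ((n.factorization p + 1 : ℕ) : ℝ) := by
        rw [Nat.card_divisors hn]; push_cast; rfl
    _ ≤ ∏ p ∈ n.primeFactors, (if p < B then c else 1) * ((p : ℝ) ^ δ) ^ n.factorization p :=
        prod_le_prod (fun _ _ => by positivity) hfactor
    _ = c ^ #{p ∈ n.primeFactors | p < B} * (n : ℝ) ^ δ := by
        rw [prod_mul_distrib, ← prod_filter, prod_const, hn_rpow]
    _ ≤ c ^ B * (n : ℝ) ^ δ := by gcongr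

lemma one_add_log_le_mul_rpow {x γ : ℝ} (hx : 1 ≤ x) (hγ : 0 < γ) :
    1 + Real.log x ≤ (1 + γ⁻¹) * x ^ γ := by
  have hlog := Real.log_le_rpow_div (x := x) (by linarith) hγ
  have hxγ : 1 ≤ x ^ γ := Real.one_le_rpow hx hγ.le
  rw [div_eq_inv_mul] at hlog
  nlinarith [inv_pos.2 hγ]

lemma one_add_log_floor_rpow_le {T A γ : ℝ} (hT : 1 ≤ T) (hA : 0 ≤ A) (hγ : 0 < γ) :
    1 + Real.log ⌊T ^ A⌋₊ ≤ (1 + γ⁻¹) * T ^ (A * γ) := by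
  have hK1 : (1 : ℝ) ≤ ⌊T ^ A⌋₊ := by
    exact_mod_cast Nat.le_floor (by simpa using Real.one_le_rpow hT hA)
  calc _ ≤ (1 + γ⁻¹) * (⌊T ^ A⌋₊ : ℝ) ^ γ := one_add_log_le_mul_rpow hK1 hγ
    _ ≤ (1 + γ⁻¹) * (T ^ A) ^ γ := by gcongr; exact Nat.floor_le (by positivity)
    _ = _ := by rw [← Real.rpow_mul (by linarith)]

lemma mul_rpow_neg_half_le {x y : ℝ} (hx : 0 < x) (hy : 0 < y) :
    (x * y) ^ (-(1 : ℝ) / 2) ≤ (x⁻¹ + y⁻¹) / 2 := by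
  have amgm := Real.geom_mean_le_arith_mean2_weighted (w₁ := 1 / 2) (w₂ := 1 / 2)
    (p₁ := x⁻¹) (p₂ := y⁻¹) (by norm_num) (by norm_num) (by positivity) (by positivity) (by norm_num)
  rw [← Real.mul_rpow (by positivity) (by positivity), ← mul_inv, Real.inv_rpow (by positivity),
    ← Real.rpow_neg (by positivity)] at amgm
  convert amgm using 2 <;> ring

def tripleProd (u : ℕ × ℕ × ℕ) : ℕ := u.1 * u.2.1 * u.2.2

def tripleBox (K : ℕ) : Finset (ℕ × ℕ × ℕ) := Icc 1 K ×ˢ Icc 1 K ×ˢ Icc 1 K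

noncomputable def nearCount (K : ℕ) (H : ℝ) (P : ℕ) : ℕ :=
  #{v ∈ tripleBox K | tripleProd v ≠ P ∧ |(tripleProd v : ℝ) - P| ≤ H}

lemma tripleProd_pos_of_mem_tripleBox {K : ℕ} {u : ℕ × ℕ × ℕ} (hu : u ∈ tripleBox K) :
    0 < tripleProd u := by
  simp only [tripleBox, mem_product, mem_Icc] at hu
  exact Nat.mul_pos (Nat.mul_pos (by omega) (by omega)) (by omega)

lemma tripleProd_le_of_mem_tripleBox {K : ℕ} {u : ℕ × ℕ × ℕ} (hu : u ∈ tripleBox K) :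
    tripleProd u ≤ K ^ 3 := by
  simp only [tripleBox, mem_product, mem_Icc] at hu
  rw [tripleProd, pow_three, ← mul_assoc]
  gcongr <;> omega

lemma card_filter_tripleProd_eq_le (s : Finset (ℕ × ℕ × ℕ)) {Q : ℕ} (hQ : Q ≠ 0) :
    #{v ∈ s | tripleProd v = Q} ≤ #Q.divisors ^ 2 := by
  rw [sq, ← card_product]
  refine card_le_card_of_injOn (fun v => (v.1, v.2.1)) (fun v hv => ?_) (fun v hv w hw hvw => ?_)
  · obtain ⟨-, rfl⟩ := mem_filter.1 hv
    simp only [coe_product, Set.mem_prod, mem_coe, Nat.mem_divisors, tripleProd] at hQ ⊢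
    exact ⟨⟨⟨v.2.1 * v.2.2, by ring⟩, hQ⟩, ⟨v.1 * v.2.2, by ring⟩, hQ⟩
  · obtain ⟨-, hvQ⟩ := mem_filter.1 (mem_coe.1 hv)
    obtain ⟨-, hwQ⟩ := mem_filter.1 (mem_coe.1 hw)
    simp only [Prod.mk.injEq] at hvw
    obtain ⟨h₁, h₂⟩ := hvw
    have h₃ : v.2.2 = w.2.2 := by
      have hne : v.1 * v.2.1 ≠ 0 := left_ne_zero_of_mul (hvQ ▸ hQ : tripleProd v ≠ 0)
      have hvw : tripleProd v = tripleProd w := hvQ.trans hwQ.symm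
      rw [tripleProd, tripleProd, ← h₁, ← h₂] at hvw
      exact Nat.eq_of_mul_eq_mul_left (Nat.pos_of_ne_zero hne) hvw
    exact Prod.ext h₁ (Prod.ext h₂ h₃)

lemma card_le_two_mul_of_abs_sub_le {s : Finset ℕ} {P : ℕ} {H : ℝ} (hH : 0 ≤ H)
    (hs : ∀ Q ∈ s, Q ≠ P ∧ |(Q : ℝ) - P| ≤ H) : (#s : ℝ) ≤ 2 * H := by
  have hsub : s ⊆ (Icc (P - ⌊H⌋₊) (P + ⌊H⌋₊)).erase P := by
    intro Q hQ
    obtain ⟨hQP, hdist⟩ := hs Q hQ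
    obtain ⟨hlo, hhi⟩ := abs_le.1 hdist
    have h₁ : Q - P ≤ ⌊H⌋₊ := Nat.le_floor <| by
      rcases le_total P Q with h | h
      · rw [Nat.cast_sub h]; linarith
      · simpa [Nat.sub_eq_zero_of_le h] using hH
    have h₂ : P - Q ≤ ⌊H⌋₊ := Nat.le_floor <| by
      rcases le_total Q P with h | h
      · rw [Nat.cast_sub h]; linarith
      · simpa [Nat.sub_eq_zero_of_le h] using hH
    exact mem_erase.2 ⟨hQP, mem_Icc.2 ⟨by omega, by omega⟩⟩
  have hcard : #s ≤ 2 * ⌊H⌋₊ := by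
    refine (card_le_card hsub).trans ?_
    rw [card_erase_of_mem (mem_Icc.2 ⟨by omega, by omega⟩), Nat.card_Icc]
    omega
  calc (#s : ℝ) ≤ 2 * ⌊H⌋₊ := by exact_mod_cast hcard
    _ ≤ 2 * H := by gcongr; exact Nat.floor_le hH

lemma nearCount_le {K : ℕ} {H D : ℝ} (P : ℕ) (hH : 0 ≤ H)
    (hD : ∀ Q : ℕ, 0 < Q → Q ≤ K ^ 3 → (#Q.divisors : ℝ) ≤ D) :
    (nearCount K H P : ℝ) ≤ 2 * H * D ^ 2 := by
  set N := {v ∈ tripleBox K | tripleProd v ≠ P ∧ |(tripleProd v : ℝ) - P| ≤ H}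
  have hfiber : ∀ Q ∈ N.image tripleProd, (#{v ∈ N | tripleProd v = Q} : ℝ) ≤ D ^ 2 := by
    intro Q hQ
    obtain ⟨v, hv, rfl⟩ := mem_image.1 hQ
    have hvbox := (mem_filter.1 hv).1
    have hpos := tripleProd_pos_of_mem_tripleBox hvbox
    calc (#{w ∈ N | tripleProd w = tripleProd v} : ℝ) ≤ (#(tripleProd v).divisors : ℝ) ^ 2 := by
          exact_mod_cast card_filter_tripleProd_eq_le N hpos.ne'
      _ ≤ D ^ 2 := by
          gcongr
          exact hD _ hpos (tripleProd_le_of_mem_tripleBox hvbox)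
  have himage : (#(N.image tripleProd) : ℝ) ≤ 2 * H :=
    card_le_two_mul_of_abs_sub_le hH fun Q hQ => by
      obtain ⟨v, hv, rfl⟩ := mem_image.1 hQ
      exact (mem_filter.1 hv).2
  calc (nearCount K H P : ℝ) = ∑ Q ∈ N.image tripleProd, (#{v ∈ N | tripleProd v = Q} : ℝ) := by
        rw [nearCount, card_eq_sum_card_image tripleProd N]; push_cast; rfl
    _ ≤ ∑ _Q ∈ N.image tripleProd, D ^ 2 := sum_le_sum hfiber
    _ = #(N.image tripleProd) * D ^ 2 := by rw [sum_const, nsmul_eq_mul]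
    _ ≤ 2 * H * D ^ 2 := by gcongr

lemma sum_inv_tripleProd_tripleBox (K : ℕ) :
    ∑ u ∈ tripleBox K, ((tripleProd u : ℝ))⁻¹ = (harmonic K : ℝ) ^ 3 := by
  simp only [tripleBox, tripleProd, sum_product, harmonic_eq_sum_Icc, Rat.cast_sum, Rat.cast_inv,
    Rat.cast_natCast, Nat.cast_mul, mul_inv, pow_three, sum_mul, mul_sum]
  exact sum_congr rfl fun _ _ => sum_congr rfl fun _ _ => sum_congr rfl fun _ _ => by ring

lemma sum_inv_mul_nearCount_le {K : ℕ} {H D : ℝ} (hH : 0 ≤ H)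
    (hD : ∀ Q : ℕ, 0 < Q → Q ≤ K ^ 3 → (#Q.divisors : ℝ) ≤ D) :
    ∑ u ∈ tripleBox K, ((tripleProd u : ℝ))⁻¹ * nearCount K H (tripleProd u) ≤
      (1 + Real.log K) ^ 3 * (2 * H * D ^ 2) :=
  calc ∑ u ∈ tripleBox K, ((tripleProd u : ℝ))⁻¹ * nearCount K H (tripleProd u)
      ≤ ∑ u ∈ tripleBox K, ((tripleProd u : ℝ))⁻¹ * (2 * H * D ^ 2) :=
        sum_le_sum fun u _ => by gcongr; exact nearCount_le _ hH hD
    _ = (harmonic K : ℝ) ^ 3 * (2 * H * D ^ 2) := by rw [← sum_mul, sum_inv_tripleProd_tripleBox]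
    _ ≤ (1 + Real.log K) ^ 3 * (2 * H * D ^ 2) := by
        gcongr
        · rw [harmonic_eq_sum_Icc]; push_cast; positivity
        · exact harmonic_le_one_add_log K

noncomputable def offDiagonalTerm (ε θ T : ℝ) (a b m₁ m₂ n₁ n₂ : ℕ) : ℝ :=
  if 1 ≤ a ∧ 1 ≤ b ∧ 1 ≤ m₁ ∧ 1 ≤ m₂ ∧ 1 ≤ n₁ ∧ 1 ≤ n₂ ∧
      (a : ℝ) ≤ T ^ θ ∧ (b : ℝ) ≤ T ^ θ ∧
      ((m₁ * m₂ * n₁ * n₂ : ℕ) : ℝ) ≤ T ^ (2 + ε) ∧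
      (a * m₁ * m₂ : ℤ) ≠ (b * n₁ * n₂ : ℤ) ∧
      ((|(a * m₁ * m₂ : ℤ) - (b * n₁ * n₂ : ℤ)| : ℤ) : ℝ) ≤
        Real.sqrt ((a * b * m₁ * m₂ * n₁ * n₂ : ℕ) : ℝ) * T ^ (-1 + ε)
  then ((a * b * m₁ * m₂ * n₁ * n₂ : ℕ) : ℝ) ^ (-(1 : ℝ) / 2) else 0

noncomputable def nearWeight (H : ℝ) (u v : ℕ × ℕ × ℕ) : ℝ :=
  if tripleProd v ≠ tripleProd u ∧ |(tripleProd v : ℝ) - tripleProd u| ≤ H then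
    (tripleProd u : ℝ)⁻¹ else 0

lemma nearWeight_nonneg (H : ℝ) (u v : ℕ × ℕ × ℕ) : 0 ≤ nearWeight H u v := by
  unfold nearWeight; split_ifs <;> positivity

lemma sum_nearWeight (K : ℕ) (H : ℝ) (u : ℕ × ℕ × ℕ) :
    ∑ v ∈ tripleBox K, nearWeight H u v = (tripleProd u : ℝ)⁻¹ * nearCount K H (tripleProd u) := by
  rw [nearCount, mul_comm, ← nsmul_eq_mul, ← sum_const, sum_filter]
  rfl

lemma tsum_six_eq_sum {M : Type*} [AddCommMonoid M] [TopologicalSpace M] (s : Finset ℕ)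
    (f : ℕ → ℕ → ℕ → ℕ → ℕ → ℕ → M)
    (hf : ∀ a b c d e g, f a b c d e g ≠ 0 → a ∈ s ∧ b ∈ s ∧ c ∈ s ∧ d ∈ s ∧ e ∈ s ∧ g ∈ s) :
    ∑' a, ∑' b, ∑' c, ∑' d, ∑' e, ∑' g, f a b c d e g =
      ∑ a ∈ s, ∑ b ∈ s, ∑ c ∈ s, ∑ d ∈ s, ∑ e ∈ s, ∑ g ∈ s, f a b c d e g := by
  have hzero : ∀ a b c d e g, ¬(a ∈ s ∧ b ∈ s ∧ c ∈ s ∧ d ∈ s ∧ e ∈ s ∧ g ∈ s) →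
      f a b c d e g = 0 := fun a b c d e g => not_imp_comm.1 (hf a b c d e g)
  rw [tsum_eq_sum (s := s) fun a ha => by simp [hzero a _ _ _ _ _ fun h => ha h.1]]
  refine sum_congr rfl fun a _ => ?_
  rw [tsum_eq_sum (s := s) fun b hb => by simp [hzero a b _ _ _ _ fun h => hb h.2.1]]
  refine sum_congr rfl fun b _ => ?_
  rw [tsum_eq_sum (s := s) fun c hc => by simp [hzero a b c _ _ _ fun h => hc h.2.2.1]]
  refine sum_congr rfl fun c _ => ?_
  rw [tsum_eq_sum (s := s) fun d hd => by simp [hzero a b c d _ _ fun h => hd h.2.2.2.1]]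
  refine sum_congr rfl fun d _ => ?_
  rw [tsum_eq_sum (s := s) fun e he => by simp [hzero a b c d e _ fun h => he h.2.2.2.2.1]]
  refine sum_congr rfl fun e _ => ?_
  exact tsum_eq_sum fun g hg => hzero a b c d e g fun h => hg h.2.2.2.2.2

lemma sum_six_eq_sum_tripleBox {M : Type*} [AddCommMonoid M] (K : ℕ)
    (f : ℕ × ℕ × ℕ → ℕ × ℕ × ℕ → M) :
    ∑ a ∈ Icc 1 K, ∑ b ∈ Icc 1 K, ∑ m₁ ∈ Icc 1 K, ∑ m₂ ∈ Icc 1 K, ∑ n₁ ∈ Icc 1 K,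
      ∑ n₂ ∈ Icc 1 K, f (a, m₁, m₂) (b, n₁, n₂) = ∑ u ∈ tripleBox K, ∑ v ∈ tripleBox K, f u v := by
  simp only [tripleBox, sum_product]
  refine sum_congr rfl fun a _ => ?_
  rw [sum_comm]
  exact sum_congr rfl fun m₁ _ => sum_comm

section offDiagonal

variable {ε θ T : ℝ}

lemma mem_Icc_of_offDiagonalTerm_ne_zero (hε : 0 < ε) (hθ : 0 ≤ θ) (hT : 1 ≤ T) {a b m₁ m₂ n₁ n₂ : ℕ}
    (h : offDiagonalTerm ε θ T a b m₁ m₂ n₁ n₂ ≠ 0) :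
    let I := Icc 1 ⌊T ^ (θ + 2 + ε)⌋₊
    a ∈ I ∧ b ∈ I ∧ m₁ ∈ I ∧ m₂ ∈ I ∧ n₁ ∈ I ∧ n₂ ∈ I := by
  unfold offDiagonalTerm at h
  split_ifs at h with hadm
  · obtain ⟨ha, hb, hm₁, hm₂, hn₁, hn₂, haT, hbT, hmn, -, -⟩ := hadm
    have hle : ∀ x : ℕ, (x : ℝ) ≤ T ^ θ ∨ (x : ℝ) ≤ T ^ (2 + ε) → x ≤ ⌊T ^ (θ + 2 + ε)⌋₊ := by
      intro x hx
      refine Nat.le_floor ?_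
      rcases hx with hx | hx
      · exact hx.trans (Real.rpow_le_rpow_of_exponent_le hT (by linarith))
      · exact hx.trans (Real.rpow_le_rpow_of_exponent_le hT (by linarith))
    have hprod : ∀ x : ℕ, x ∣ m₁ * m₂ * n₁ * n₂ → (x : ℝ) ≤ T ^ (2 + ε) := fun x hx =>
      le_trans (by exact_mod_cast Nat.le_of_dvd (by positivity) hx) hmn
    simp only [mem_Icc]
    refine ⟨⟨ha, hle a (.inl haT)⟩, ⟨hb, hle b (.inl hbT)⟩, ⟨hm₁, hle m₁ (.inr (hprod _ ?_))⟩,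
      ⟨hm₂, hle m₂ (.inr (hprod _ ?_))⟩, ⟨hn₁, hle n₁ (.inr (hprod _ ?_))⟩,
      ⟨hn₂, hle n₂ (.inr (hprod _ ?_))⟩⟩
    exacts [⟨m₂ * n₁ * n₂, by ring⟩, ⟨m₁ * n₁ * n₂, by ring⟩, ⟨m₁ * m₂ * n₂, by ring⟩,
      ⟨m₁ * m₂ * n₁, by ring⟩]
  · exact absurd rfl h

lemma offDiagonalTerm_le (hT : 0 < T) (a b m₁ m₂ n₁ n₂ : ℕ) :
    offDiagonalTerm ε θ T a b m₁ m₂ n₁ n₂ ≤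
      (nearWeight (T ^ (θ + 3 * ε / 2)) (a, m₁, m₂) (b, n₁, n₂) +
        nearWeight (T ^ (θ + 3 * ε / 2)) (b, n₁, n₂) (a, m₁, m₂)) / 2 := by
  unfold offDiagonalTerm
  split_ifs with hadm
  · obtain ⟨ha, hb, hm₁, hm₂, hn₁, hn₂, haT, hbT, hmn, hne, hh⟩ := hadm
    set P := tripleProd (a, m₁, m₂)
    set Q := tripleProd (b, n₁, n₂)
    have hP : (0 : ℝ) < P := by simp only [P, tripleProd]; positivity
    have hQ : (0 : ℝ) < Q := by simp only [Q, tripleProd]; positivity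
    have hprod : ((a * b * m₁ * m₂ * n₁ * n₂ : ℕ) : ℝ) = P * Q := by
      simp only [P, Q, tripleProd]; push_cast; ring
    have hQP : Q ≠ P := fun h => hne (by simp only [P, Q, tripleProd] at h; exact_mod_cast h.symm)
    have hsqrt : √((P : ℝ) * Q) ≤ T ^ (θ + 1 + ε / 2) := by
      rw [Real.sqrt_le_left (by positivity), ← Real.rpow_natCast, ← Real.rpow_mul hT.le,
        show (θ + 1 + ε / 2) * ((2 : ℕ) : ℝ) = θ + θ + (2 + ε) by push_cast; ring,
        Real.rpow_add hT, Real.rpow_add hT, ← hprod]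
      calc ((a * b * m₁ * m₂ * n₁ * n₂ : ℕ) : ℝ) = a * b * ((m₁ * m₂ * n₁ * n₂ : ℕ) : ℝ) := by
            push_cast; ring
        _ ≤ T ^ θ * T ^ θ * T ^ (2 + ε) := by gcongr
    have hdist : |(Q : ℝ) - P| ≤ T ^ (θ + 3 * ε / 2) :=
      calc |(Q : ℝ) - P| = ((|(a * m₁ * m₂ : ℤ) - (b * n₁ * n₂ : ℤ)| : ℤ) : ℝ) := by
            simp only [P, Q, tripleProd]; push_cast; rw [abs_sub_comm]
        _ ≤ √((P : ℝ) * Q) * T ^ (-1 + ε) := hprod ▸ hh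
        _ ≤ T ^ (θ + 1 + ε / 2) * T ^ (-1 + ε) := by gcongr
        _ = T ^ (θ + 3 * ε / 2) := by rw [← Real.rpow_add hT]; ring_nf
    unfold nearWeight
    rw [if_pos ⟨hQP, hdist⟩, if_pos ⟨hQP.symm, by rwa [abs_sub_comm]⟩, hprod]
    exact mul_rpow_neg_half_le hP hQ
  · exact div_nonneg (add_nonneg (nearWeight_nonneg _ _ _) (nearWeight_nonneg _ _ _)) zero_le_two

lemma tsum_offDiagonalTerm_le (hε : 0 < ε) (hθ : 0 ≤ θ) (hT : 1 ≤ T) :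
    ∑' a, ∑' b, ∑' m₁, ∑' m₂, ∑' n₁, ∑' n₂, offDiagonalTerm ε θ T a b m₁ m₂ n₁ n₂ ≤
      ∑ u ∈ tripleBox ⌊T ^ (θ + 2 + ε)⌋₊, ((tripleProd u : ℝ))⁻¹ *
        nearCount ⌊T ^ (θ + 2 + ε)⌋₊ (T ^ (θ + 3 * ε / 2)) (tripleProd u) := by
  set K := ⌊T ^ (θ + 2 + ε)⌋₊
  set H := T ^ (θ + 3 * ε / 2)
  rw [tsum_six_eq_sum (Icc 1 K) _ fun a b m₁ m₂ n₁ n₂ => mem_Icc_of_offDiagonalTerm_ne_zero hε hθ hT]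
  calc _ ≤ ∑ a ∈ Icc 1 K, ∑ b ∈ Icc 1 K, ∑ m₁ ∈ Icc 1 K, ∑ m₂ ∈ Icc 1 K, ∑ n₁ ∈ Icc 1 K,
        ∑ n₂ ∈ Icc 1 K,
          (nearWeight H (a, m₁, m₂) (b, n₁, n₂) + nearWeight H (b, n₁, n₂) (a, m₁, m₂)) / 2 := by
        gcongr
        exact offDiagonalTerm_le (by linarith) _ _ _ _ _ _
    _ = ∑ u ∈ tripleBox K, ∑ v ∈ tripleBox K, (nearWeight H u v + nearWeight H v u) / 2 :=
        sum_six_eq_sum_tripleBox K fun u v => (nearWeight H u v + nearWeight H v u) / 2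
    _ = ∑ u ∈ tripleBox K, ∑ v ∈ tripleBox K, nearWeight H u v := by
        simp only [add_div, sum_add_distrib, ← sum_div]
        rw [sum_comm (f := fun u v => nearWeight H v u)]
        ring
    _ = _ := sum_congr rfl fun u _ => sum_nearWeight K H u

end offDiagonal

/-- the trivial bound for the off-diagonal count.  For every
`ε > 0` and `θ ≥ 0` there is a constant `C` such that for all `T ≥ 2`,
`∑_{a,b ≤ T^θ} ∑ (a b m₁ m₂ n₁ n₂)^{−1/2} ≤ C T^{θ+2ε}`, the inner sum running
over positive integers `m₁,m₂,n₁,n₂` with `m₁m₂n₁n₂ ≤ T^{2+ε}`,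
`h := a m₁ m₂ − b n₁ n₂ ≠ 0` and `|h| ≤ √(a b m₁ m₂ n₁ n₂) T^{−1+ε}`. -/
theorem stmt_19 (ε θ : ℝ) (hε : 0 < ε) (hθ : 0 ≤ θ) :
    ∃ C : ℝ, ∀ T : ℝ, 2 ≤ T →
      (∑' a : ℕ, ∑' b : ℕ, ∑' m₁ : ℕ, ∑' m₂ : ℕ, ∑' n₁ : ℕ, ∑' n₂ : ℕ,
        if 1 ≤ a ∧ 1 ≤ b ∧ 1 ≤ m₁ ∧ 1 ≤ m₂ ∧ 1 ≤ n₁ ∧ 1 ≤ n₂ ∧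
            (a : ℝ) ≤ T ^ θ ∧ (b : ℝ) ≤ T ^ θ ∧
            ((m₁ * m₂ * n₁ * n₂ : ℕ) : ℝ) ≤ T ^ (2 + ε) ∧
            (a * m₁ * m₂ : ℤ) ≠ (b * n₁ * n₂ : ℤ) ∧
            ((|(a * m₁ * m₂ : ℤ) - (b * n₁ * n₂ : ℤ)| : ℤ) : ℝ) ≤
              Real.sqrt ((a * b * m₁ * m₂ * n₁ * n₂ : ℕ) : ℝ) * T ^ (-1 + ε)
        then ((a * b * m₁ * m₂ * n₁ * n₂ : ℕ) : ℝ) ^ (-(1 : ℝ) / 2) else 0)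
      ≤ C * T ^ (θ + 2 * ε) := by
  have hA : 0 < θ + 2 + ε := by linarith
  set δ := ε / (24 * (θ + 2 + ε))
  set γ := ε / (12 * (θ + 2 + ε))
  obtain ⟨Cd, hCd⟩ := Nat.card_divisors_le_mul_rpow (δ := δ) (by positivity)
  have hCd0 : 0 ≤ Cd := by
    have := hCd 1 one_ne_zero
    simp only [Nat.divisors_one, card_singleton, Nat.cast_one, Real.one_rpow, mul_one] at this
    linarith
  refine ⟨2 * (1 + γ⁻¹) ^ 3 * Cd ^ 2, fun T hT => ?_⟩
  have hT0 : 0 < T := by linarith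
  set K := ⌊T ^ (θ + 2 + ε)⌋₊
  have hlog : 1 + Real.log K ≤ (1 + γ⁻¹) * T ^ (ε / 12) := by
    convert one_add_log_floor_rpow_le (γ := γ) (by linarith) hA.le (by positivity) using 3
    simp only [γ]
    field_simp
  have hD : ∀ Q : ℕ, 0 < Q → Q ≤ K ^ 3 → (#Q.divisors : ℝ) ≤ Cd * T ^ (ε / 8) := by
    intro Q hQ hQK
    have hQT : (Q : ℝ) ≤ (T ^ (θ + 2 + ε)) ^ 3 :=
      (Nat.cast_le.2 hQK).trans (by push_cast; gcongr; exact Nat.floor_le (by positivity))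
    calc _ ≤ Cd * (Q : ℝ) ^ δ := hCd Q hQ.ne'
      _ ≤ Cd * ((T ^ (θ + 2 + ε)) ^ 3) ^ δ := by gcongr
      _ = _ := by
          rw [← Real.rpow_natCast, ← Real.rpow_mul hT0.le, ← Real.rpow_mul hT0.le]
          congr 2; simp only [δ]; field_simp; norm_num
  calc _ ≤ _ := tsum_offDiagonalTerm_le hε hθ (by linarith)
    _ ≤ (1 + Real.log K) ^ 3 * (2 * T ^ (θ + 3 * ε / 2) * (Cd * T ^ (ε / 8)) ^ 2) :=
        sum_inv_mul_nearCount_le (by positivity) hD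
    _ ≤ ((1 + γ⁻¹) * T ^ (ε / 12)) ^ 3 * (2 * T ^ (θ + 3 * ε / 2) * (Cd * T ^ (ε / 8)) ^ 2) := by
        gcongr
    _ = 2 * (1 + γ⁻¹) ^ 3 * Cd ^ 2 * T ^ (θ + 2 * ε) := by
        rw [show θ + 2 * ε = ε / 12 + ε / 12 + ε / 12 + (θ + 3 * ε / 2) + ε / 8 + ε / 8 by ring]
        simp only [Real.rpow_add hT0]
        ring
end
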